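/- arXiv:2504.09633 — 6 statements merged into one kernel-verified Lean document; each statement's English description precedes it below -/
import Mathlib

section
/- Let G be a rooted directed graph with root o having no finite strongly connected components. Then for all n ∈ ℕ, F_G(|B_G(o, n−1)|) ≥ n, where B_G(o, r) is the set of vertices at directed distance at most r from o. -/
open scoped ENNReal

/-- `reachIn E k a b`: there is a directed path of length `k` from `a` to `b`. -/
def reachIn {V : Type*} (E : V → V → Prop) : ℕ → V → V → Prop
  | 0, a, b => a = b
  | (n+1), a, b => ∃ c, E a c ∧ reachIn E n c b

/-- Directed graph distance, valued in `ℕ∞`. -/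
noncomputable def gdist {V : Type*} (E : V → V → Prop) (a b : V) : ℕ∞ :=
  sInf {n : ℕ∞ | ∃ k : ℕ, (k : ℕ∞) = n ∧ reachIn E k a b}

/-- The rooted ball spread `F_G(n) = min_v max_{w : dist(v,w) ≤ n} dist(o,w)`. -/
noncomputable def ballSpread {V : Type*} (E : V → V → Prop) (o : V) (n : ℕ) : ℕ∞ :=
  ⨅ v : V, ⨆ w ∈ {w | gdist E v w ≤ (n : ℕ∞)}, gdist E o w

/-- The strongly connected component of a vertex `v`. -/
def scc {V : Type*} (E : V → V → Prop) (v : V) : Set V :=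
  {w | Relation.ReflTransGen E v w ∧ Relation.ReflTransGen E w v}

/-!
Let `m = |B(o, n-1)|` and suppose some `v` had `B(v, m) ⊆ B(o, n-1)`. The balls `B(v, k)` grow
strictly with `k`: if `B(v, k) = B(v, k+1)` then `B(v, k)` is closed under edges, hence contains
everything reachable from `v`, in particular the strongly connected component of `v`, which is
infinite. So `|B(v, m)| ≥ m + 1 > |B(o, n-1)|`, a contradiction; hence every ball `B(v, m)` meets
a vertex at distance `≥ n` from `o`.
-/

section

variable {V : Type*} {E : V → V → Prop}

def gball (E : V → V → Prop) (v : V) (k : ℕ) : Set V :=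
  {w | gdist E v w ≤ (k : ℕ∞)}

lemma reachIn_succ_of_reachIn_of_adj :
    ∀ {k : ℕ} {a b c : V}, reachIn E k a b → E b c → reachIn E (k + 1) a c
  | 0, _, _, c, rfl, hbc => ⟨c, hbc, rfl⟩
  | _ + 1, _, _, _, ⟨d, had, hdb⟩, hbc => ⟨d, had, reachIn_succ_of_reachIn_of_adj hdb hbc⟩

lemma gdist_le_natCast_iff {a b : V} {k : ℕ} :
    gdist E a b ≤ k ↔ ∃ j ≤ k, reachIn E j a b := by
  constructor
  · intro h
    obtain ⟨j, hj, hreach⟩ : sInf {n : ℕ∞ | ∃ k : ℕ, (k : ℕ∞) = n ∧ reachIn E k a b} ∈ _ := by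
      refine csInf_mem (Set.nonempty_iff_ne_empty.2 fun hempty => ?_)
      rw [gdist, hempty, sInf_empty] at h
      exact (ENat.natCast_lt_top k).not_ge h
    exact ⟨j, by exact_mod_cast hj.trans_le h, hreach⟩
  · rintro ⟨j, hjk, hreach⟩
    calc gdist E a b ≤ j := sInf_le ⟨j, rfl, hreach⟩
      _ ≤ k := by exact_mod_cast hjk

lemma mem_gball_self (v : V) (k : ℕ) : v ∈ gball E v k :=
  gdist_le_natCast_iff.2 ⟨0, k.zero_le, rfl⟩

lemma gball_mono (v : V) {k l : ℕ} (hkl : k ≤ l) : gball E v k ⊆ gball E v l :=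
  fun _ hw => le_trans (α := ℕ∞) hw (by exact_mod_cast hkl)

lemma adj_mem_gball_succ {v a b : V} {k : ℕ} (ha : a ∈ gball E v k) (hab : E a b) :
    b ∈ gball E v (k + 1) := by
  obtain ⟨j, hjk, hreach⟩ := gdist_le_natCast_iff.1 ha
  exact gdist_le_natCast_iff.2 ⟨j + 1, by omega, reachIn_succ_of_reachIn_of_adj hreach hab⟩

lemma scc_subset_gball_of_gball_succ_eq {v : V} {k : ℕ}
    (heq : gball E v (k + 1) = gball E v k) : scc E v ⊆ gball E v k := by
  rintro w ⟨hvw, -⟩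
  induction hvw with
  | refl => exact mem_gball_self v k
  | tail _ hab ih => exact heq ▸ adj_mem_gball_succ ih hab

lemma succ_le_ncard_gball {v : V} {k : ℕ} (hfin : (gball E v k).Finite)
    (hscc : ¬ (scc E v).Finite) : k + 1 ≤ (gball E v k).ncard := by
  induction k with
  | zero => exact (Set.ncard_pos hfin).2 ⟨v, mem_gball_self v 0⟩
  | succ k ih =>
    have hsub : gball E v k ⊆ gball E v (k + 1) := gball_mono v k.le_succ
    have hne : gball E v k ≠ gball E v (k + 1) := fun heq =>
      hscc ((hfin.subset hsub).subset (scc_subset_gball_of_gball_succ_eq heq.symm))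
    have hlt := Set.ncard_lt_ncard (hsub.ssubset_of_ne hne) hfin
    have hk := ih (hfin.subset hsub)
    omega

lemma not_gball_subset_of_ncard_le {v : V} {S : Set V} {m : ℕ} (hS : S.Finite)
    (hm : S.ncard ≤ m) (hscc : ¬ (scc E v).Finite) : ¬ gball E v m ⊆ S := fun hsub => by
  have hlower := succ_le_ncard_gball (hS.subset hsub) hscc
  have hupper := Set.ncard_le_ncard hsub hS
  omega

lemma natCast_le_of_not_le_pred {n : ℕ} {d : ℕ∞} (h : ¬ d ≤ ((n - 1 : ℕ) : ℕ∞)) :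
    (n : ℕ∞) ≤ d := by
  rcases n with _ | n
  · exact bot_le
  · simpa using Order.add_one_le_of_lt (not_le.1 h)

end

theorem stmt2_general {V : Type*} (E : V → V → Prop) (o : V)
    (hball : ∀ r : ℕ, {w : V | gdist E o w ≤ (r : ℕ∞)}.Finite)
    (hscc : ∀ v : V, ¬ (scc E v).Finite) :
    ∀ n : ℕ, (n : ℕ∞) ≤ ballSpread E o ({w : V | gdist E o w ≤ ((n - 1 : ℕ) : ℕ∞)}.ncard) := by
  intro n
  refine le_iInf fun v => ?_
  obtain ⟨w, hw, hfar⟩ := Set.not_subset.1 <|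
    not_gball_subset_of_ncard_le (hball (n - 1)) le_rfl (hscc v)
  exact (natCast_le_of_not_le_pred hfar).trans (le_biSup (gdist E o) hw)

/-- If a rooted directed graph (with finite balls around the root) has no finite
strongly connected components, then `F_G(|B_G(o, n−1)|) ≥ n` for all `n`. -/
theorem stmt2 {V : Type*} (E : V → V → Prop) (o : V)
    (hroot : ∀ v, Relation.ReflTransGen E o v)
    (hball : ∀ r : ℕ, {w : V | gdist E o w ≤ (r : ℕ∞)}.Finite)
    (hscc : ∀ v : V, ¬ (scc E v).Finite) :
    ∀ n : ℕ, (n : ℕ∞) ≤ ballSpread E o ({w : V | gdist E o w ≤ ((n - 1 : ℕ) : ℕ∞)}.ncard) :=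
  stmt2_general E o hball hscc
end

section
/- Let G be a rooted directed graph without finite strongly connected components in which every vertex has outdegree at most d ≥ 2. Then F_G(n) ≥ log_d(n) − 1 for all n ∈ ℕ. -/
/-! Since no strongly connected component is finite, infinitely many vertices are reachable from
every vertex, so balls grow strictly with the radius: a ball that stops growing once stays put
forever. Hence the ball of radius `n` around any vertex `v` has at least `n + 1` vertices. If
every vertex at distance `≤ n` from `v` is within distance `m` of the root, this ball sits inside
the ball of radius `m` around `o`, which has fewer than `d ^ (m + 1)` vertices; so
`n < d ^ (m + 1)`, i.e. `m ≥ log_d n - 1`. -/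

open scoped ENNReal

theorem Set.Finite.ncard_biUnion_le_mul {ι α : Type*} {t : Set ι} (ht : t.Finite)
    {s : ι → Set α} {d : ℕ} (hs : ∀ i ∈ t, (s i).ncard ≤ d) :
    (⋃ i ∈ t, s i).ncard ≤ d * t.ncard := by
  calc (⋃ i ∈ t, s i).ncard ≤ ∑ i ∈ ht.toFinset, (s i).ncard := by
        simpa using ht.toFinset.set_ncard_biUnion_le s
  _ ≤ ht.toFinset.card • d := Finset.sum_le_card_nsmul _ _ _ fun i hi => hs i (by simpa using hi)
  _ = d * t.ncard := by rw [Set.ncard_eq_toFinset_card t ht, smul_eq_mul, mul_comm]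

section OutBall

variable {V : Type*} {E : V → V → Prop}

def outBall (E : V → V → Prop) (v : V) (n : ℕ) : Set V := {w | ∃ k ≤ n, reachIn E k v w}

lemma reachIn_succ_iff' {n : ℕ} {a b : V} :
    reachIn E (n + 1) a b ↔ ∃ c, reachIn E n a c ∧ E c b := by
  induction n generalizing a with
  | zero =>
    constructor
    · rintro ⟨c, hc, rfl⟩; exact ⟨a, rfl, hc⟩
    · rintro ⟨c, rfl, hc⟩; exact ⟨b, hc, rfl⟩
  | succ n ih =>
    constructor
    · rintro ⟨c, hac, hcb⟩
      obtain ⟨e, he, heb⟩ := ih.mp hcb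
      exact ⟨e, ⟨c, hac, he⟩, heb⟩
    · rintro ⟨c, ⟨e, hae, hec⟩, hcb⟩
      exact ⟨e, hae, ih.mpr ⟨c, hec, hcb⟩⟩

lemma exists_reachIn_of_reflTransGen {v w : V} (h : Relation.ReflTransGen E v w) :
    ∃ k, reachIn E k v w := by
  induction h with
  | refl => exact ⟨0, rfl⟩
  | tail _ he ih =>
    obtain ⟨k, hk⟩ := ih
    exact ⟨k + 1, reachIn_succ_iff'.mpr ⟨_, hk, he⟩⟩

lemma self_mem_outBall (v : V) (n : ℕ) : v ∈ outBall E v n := ⟨0, n.zero_le, rfl⟩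

lemma outBall_zero (v : V) : outBall E v 0 = {v} := by
  ext w
  constructor
  · rintro ⟨k, hk, hr⟩
    obtain rfl := Nat.le_zero.mp hk
    exact hr.symm
  · rintro rfl
    exact self_mem_outBall w 0

lemma outBall_mono (v : V) {m n : ℕ} (h : m ≤ n) : outBall E v m ⊆ outBall E v n :=
  fun _ ⟨k, hk, hr⟩ => ⟨k, hk.trans h, hr⟩

lemma mem_outBall_succ {v w : V} {n : ℕ} :
    w ∈ outBall E v (n + 1) ↔ w = v ∨ ∃ u ∈ outBall E v n, E u w := by
  constructor
  · rintro ⟨_ | k, hk, hr⟩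
    · exact .inl hr.symm
    · obtain ⟨u, hvu, huw⟩ := reachIn_succ_iff'.mp hr
      exact .inr ⟨u, ⟨k, by omega, hvu⟩, huw⟩
  · rintro (rfl | ⟨u, ⟨k, hk, hvu⟩, huw⟩)
    · exact self_mem_outBall w _
    · exact ⟨k + 1, by omega, reachIn_succ_iff'.mpr ⟨u, hvu, huw⟩⟩

lemma outBall_succ_eq (v : V) (n : ℕ) :
    outBall E v (n + 1) = insert v (⋃ u ∈ outBall E v n, {w | E u w}) := by
  ext w
  simp only [mem_outBall_succ, Set.mem_insert_iff, Set.mem_iUnion, Set.mem_ofPred_eq, exists_prop]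

lemma gdist_le_iff_mem_outBall {a b : V} {n : ℕ} :
    gdist E a b ≤ n ↔ b ∈ outBall E a n := by
  constructor
  · intro h
    by_contra hb
    have hlow : (n + 1 : ℕ∞) ≤ gdist E a b := by
      refine le_sInf ?_
      rintro _ ⟨k, rfl, hk⟩
      exact_mod_cast Nat.lt_of_not_le fun hkn => hb ⟨k, hkn, hk⟩
    have : n + 1 ≤ n := by exact_mod_cast hlow.trans h
    omega
  · rintro ⟨k, hk, hr⟩
    exact (sInf_le ⟨k, rfl, hr⟩ : gdist E a b ≤ k).trans (by exact_mod_cast hk)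

lemma outBall_finite (hfin : ∀ u : V, {w | E u w}.Finite) (v : V) (n : ℕ) :
    (outBall E v n).Finite := by
  induction n with
  | zero => rw [outBall_zero]; exact Set.finite_singleton v
  | succ n ih =>
    rw [outBall_succ_eq]
    exact (ih.biUnion fun u _ => hfin u).insert v

lemma outBall_subset_of_succ_subset {v : V} {k : ℕ}
    (h : outBall E v (k + 1) ⊆ outBall E v k) (m : ℕ) : outBall E v m ⊆ outBall E v k := by
  induction m with
  | zero => exact outBall_mono v k.zero_le
  | succ m ih =>
    rintro w hw
    rcases mem_outBall_succ.mp hw with rfl | ⟨u, hu, huw⟩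
    · exact self_mem_outBall w k
    · exact h (mem_outBall_succ.mpr (.inr ⟨u, ih hu, huw⟩))

lemma outBall_ssubset_succ (hfin : ∀ u : V, {w | E u w}.Finite) {v : V}
    (hinf : {w | Relation.ReflTransGen E v w}.Infinite) (k : ℕ) :
    outBall E v k ⊂ outBall E v (k + 1) := by
  refine ⟨outBall_mono v k.le_succ, fun hsub => hinf ((outBall_finite hfin v k).subset ?_)⟩
  intro w hw
  obtain ⟨j, hj⟩ := exists_reachIn_of_reflTransGen hw
  exact outBall_subset_of_succ_subset hsub j ⟨j, le_rfl, hj⟩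

lemma succ_le_ncard_outBall (hfin : ∀ u : V, {w | E u w}.Finite) {v : V}
    (hinf : {w | Relation.ReflTransGen E v w}.Infinite) (n : ℕ) :
    n + 1 ≤ (outBall E v n).ncard := by
  induction n with
  | zero => simp [outBall_zero]
  | succ n ih =>
    have := Set.ncard_lt_ncard (outBall_ssubset_succ hfin hinf n) (outBall_finite hfin v (n + 1))
    omega

lemma ncard_outBall_lt_pow {d : ℕ} (hd : 2 ≤ d) (hfin : ∀ u : V, {w | E u w}.Finite)
    (hdeg : ∀ u : V, {w | E u w}.ncard ≤ d) (v : V) (n : ℕ) :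
    (outBall E v n).ncard < d ^ (n + 1) := by
  induction n with
  | zero => rw [outBall_zero, Set.ncard_singleton, zero_add, pow_one]; omega
  | succ n ih =>
    have hstep : (outBall E v (n + 1)).ncard ≤ d * (outBall E v n).ncard + 1 := by
      rw [outBall_succ_eq]
      exact (Set.ncard_insert_le _ _).trans (Nat.add_le_add_right
        ((outBall_finite hfin v n).ncard_biUnion_le_mul fun u _ => hdeg u) 1)
    have hmul : d * ((outBall E v n).ncard + 1) ≤ d ^ (n + 1 + 1) := by
      rw [pow_succ' d (n + 1)]
      exact Nat.mul_le_mul_left d ih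
    rw [mul_add, mul_one] at hmul
    omega

lemma outBall_subset_of_iSup_gdist_le {o v : V} {n m : ℕ}
    (h : (⨆ w ∈ {w | gdist E v w ≤ (n : ℕ∞)}, gdist E o w) ≤ m) :
    outBall E v n ⊆ outBall E o m := fun _ hw =>
  gdist_le_iff_mem_outBall.mp ((le_biSup (gdist E o) (gdist_le_iff_mem_outBall.mpr hw)).trans h)

end OutBall

lemma Real.logb_sub_one_le_of_lt_pow {b n m : ℕ} (hb : 1 < b) (h : n < b ^ (m + 1)) :
    Real.logb b n - 1 ≤ m := by
  rcases n.eq_zero_or_pos with rfl | hn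
  · rw [Nat.cast_zero, Real.logb_zero]
    linarith [(m.cast_nonneg : (0 : ℝ) ≤ m)]
  have hb' : (1 : ℝ) < b := by exact_mod_cast hb
  have : Real.logb b n ≤ m + 1 :=
    calc Real.logb b n ≤ Real.logb b ((b : ℝ) ^ (m + 1)) :=
          Real.logb_le_logb_of_le hb' (by exact_mod_cast hn) (by exact_mod_cast h.le)
    _ = m + 1 := by rw [Real.logb_pow, Real.logb_self_eq_one hb', mul_one]; push_cast; ring
  linarith

theorem stmt3_general {V : Type*} (E : V → V → Prop) (o : V) (d : ℕ) (hd : 2 ≤ d)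
    (hdeg : ∀ v : V, {w | E v w}.Finite ∧ {w | E v w}.ncard ≤ d)
    (hscc : ∀ v : V, ¬ (scc E v).Finite) :
    ∀ n : ℕ, ENNReal.ofReal (Real.logb d n - 1) ≤ (ballSpread E o n : ℝ≥0∞) := by
  obtain ⟨hfin, hcard⟩ := forall_and.mp hdeg
  intro n
  rw [ballSpread, ENat.toENNReal_iInf]
  refine le_iInf fun v => ?_
  generalize hT : (⨆ w ∈ {w | gdist E v w ≤ (n : ℕ∞)}, gdist E o w) = T
  induction T using ENat.recTopCoe with
  | top => simp
  | coe m =>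
    have hinf : {w | Relation.ReflTransGen E v w}.Infinite :=
      Set.Infinite.mono (fun _ hw => hw.1) (hscc v)
    have hn : n < d ^ (m + 1) :=
      calc n < (outBall E v n).ncard := succ_le_ncard_outBall hfin hinf n
      _ ≤ (outBall E o m).ncard := Set.ncard_le_ncard (outBall_subset_of_iSup_gdist_le hT.le)
            (outBall_finite hfin o m)
      _ < d ^ (m + 1) := ncard_outBall_lt_pow hd hfin hcard o m
    rw [ENat.toENNReal_coe, ← ENNReal.ofReal_natCast]
    exact ENNReal.ofReal_le_ofReal (Real.logb_sub_one_le_of_lt_pow (by omega) hn)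

/-- If a rooted directed graph has no finite strongly connected components and all
outdegrees are at most `d ≥ 2`, then `F_G(n) ≥ log_d n − 1` for all `n`. -/
theorem stmt3 {V : Type*} (E : V → V → Prop) (o : V) (d : ℕ) (hd : 2 ≤ d)
    (hroot : ∀ v, Relation.ReflTransGen E o v)
    (hdeg : ∀ v : V, {w | E v w}.Finite ∧ {w | E v w}.ncard ≤ d)
    (hscc : ∀ v : V, ¬ (scc E v).Finite) :
    ∀ n : ℕ, ENNReal.ofReal (Real.logb d n - 1) ≤ (ballSpread E o n : ℝ≥0∞) :=
  stmt3_general E o d hd hdeg hscc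
end

section
/- Let S be a semigroup generated by a finite set T of size d, and suppose S contains a finite right ideal I (i.e., IS ⊆ I and I is finite and nonempty). Let R_n = X_1⋯X_n be a simple random walk on S where X_i are i.i.d. uniform on T. Then E[|R_n|] is bounded uniformly in n, where |a| denotes the word length of a with respect to T. -/
/-!
Fix a word `w` over `T` of length `L > 0` whose product lies in `I`, and cut the walk into
consecutive blocks of length `L`. Once some block `J` spells `w`, the walk stays in
`R_{LJ} · I`, so `|R_n| ≤ LJ + max_{a ∈ I} |a|`; before that, `|R_n| ≤ n`. Hence `|R_n|` is
dominated by `max_{a ∈ I} |a| + L · (index of the first block spelling w, plus one)`, uniformly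
in `n`, and that index has a geometric tail: the first `j` blocks all miss `w` with probability
at most `(1 - |T|^{-L})^j`.
-/

open MeasureTheory ProbabilityTheory
open scoped ENNReal

/-- Word length of `a` in a monoid with respect to a generating set `T`:
the least `k` such that `a` is a product of `k` elements of `T`. -/
noncomputable def wordLength {S : Type*} [Monoid S] (T : Finset S) (a : S) : ℕ :=
  sInf {k : ℕ | ∃ l : List S, l.length = k ∧ (∀ t ∈ l, t ∈ T) ∧ l.prod = a}

section WordLength

variable {S : Type*} [Monoid S] {T : Finset S}

lemma wordLength_prod_le_length {l : List S} (h : ∀ t ∈ l, t ∈ T) :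
    wordLength T l.prod ≤ l.length :=
  Nat.sInf_le ⟨l, rfl, h, rfl⟩

lemma wordLength_mul_le (hgen : Submonoid.closure (T : Set S) = ⊤) (x y : S) :
    wordLength T (x * y) ≤ wordLength T x + wordLength T y := by
  have hne : ∀ z : S,
      {k : ℕ | ∃ l : List S, l.length = k ∧ (∀ t ∈ l, t ∈ T) ∧ l.prod = z}.Nonempty := by
    intro z
    obtain ⟨l, hl, hp⟩ := Submonoid.exists_list_of_mem_closure (hgen ▸ Submonoid.mem_top z)
    exact ⟨l.length, l, rfl, hl, hp⟩
  obtain ⟨lx, hlx, hmx, hpx⟩ := Nat.sInf_mem (hne x)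
  obtain ⟨ly, hly, hmy, hpy⟩ := Nat.sInf_mem (hne y)
  refine Nat.sInf_le ⟨lx ++ ly, by simp [hlx, hly, wordLength], ?_, ?_⟩
  · simpa only [List.mem_append] using fun t ht => ht.elim (hmx t) (hmy t)
  · rw [List.prod_append, hpx, hpy]

lemma exists_pos_length_word_prod_mem (hgen : Submonoid.closure (T : Set S) = ⊤)
    (hT : T.Nonempty) {I : Set S} (hideal : ∀ a ∈ I, ∀ s : S, a * s ∈ I) (hIne : I.Nonempty) :
    ∃ L > 0, ∃ w : Fin L → S, (∀ t, w t ∈ T) ∧ (List.ofFn w).prod ∈ I := by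
  obtain ⟨a, ha⟩ := hIne
  obtain ⟨t, ht⟩ := hT
  obtain ⟨l, hl, rfl⟩ := Submonoid.exists_list_of_mem_closure (hgen ▸ Submonoid.mem_top a)
  refine ⟨(l ++ [t]).length, by simp, (l ++ [t]).get, fun i => ?_, ?_⟩
  · have := List.get_mem (l ++ [t]) i
    simp only [List.mem_append, List.mem_singleton] at this
    rcases this with h | h
    · exact hl _ h
    · rw [h]; exact ht
  · rw [List.ofFn_get, List.prod_append, List.prod_singleton]
    exact hideal _ ha t

end WordLength

def block {S : Type*} (x : ℕ → S) (L i : ℕ) : Fin L → S := fun t => x (L * i + t)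

section Walk

variable {S : Type*} [Monoid S]

def walkProd (x : ℕ → S) (n : ℕ) : S := ((List.range n).map x).prod

lemma walkProd_add (x : ℕ → S) (m k : ℕ) :
    walkProd x (m + k) = walkProd x m * walkProd (fun i => x (m + i)) k := by
  simp [walkProd, List.range_add, Function.comp_def]

lemma walkProd_shift_eq_prod_block (x : ℕ → S) (L i : ℕ) :
    walkProd (fun t => x (L * i + t)) L = (List.ofFn (block x L i)).prod := by
  unfold walkProd
  congr 1
  apply List.ext_getElem <;> simp [block]

variable {T : Finset S} {x : ℕ → S}

lemma wordLength_walkProd_le (hx : ∀ i, x i ∈ T) (n : ℕ) : wordLength T (walkProd x n) ≤ n :=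
  (wordLength_prod_le_length (by simpa using fun i _ => hx i)).trans_eq (by simp)

variable {I : Set S} {M L : ℕ} {w : Fin L → S}

lemma wordLength_walkProd_le_of_block_eq (hgen : Submonoid.closure (T : Set S) = ⊤)
    (hideal : ∀ a ∈ I, ∀ s : S, a * s ∈ I) (hM : ∀ a ∈ I, wordLength T a ≤ M)
    (hx : ∀ i, x i ∈ T) (hw : (List.ofFn w).prod ∈ I) {J n : ℕ} (hJ : block x L J = w)
    (hn : L * J + L ≤ n) : wordLength T (walkProd x n) ≤ L * J + M := by
  obtain ⟨r, rfl⟩ := Nat.exists_eq_add_of_le hn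
  rw [walkProd_add, walkProd_add, walkProd_shift_eq_prod_block, hJ, mul_assoc]
  calc _ ≤ wordLength T (walkProd x (L * J)) + wordLength T ((List.ofFn w).prod * _) :=
        wordLength_mul_le hgen _ _
    _ ≤ L * J + M := add_le_add (wordLength_walkProd_le hx _) (hM _ (hideal _ hw _))

lemma exists_wordLength_walkProd_le (hgen : Submonoid.closure (T : Set S) = ⊤)
    (hideal : ∀ a ∈ I, ∀ s : S, a * s ∈ I) (hM : ∀ a ∈ I, wordLength T a ≤ M)
    (hx : ∀ i, x i ∈ T) (hL : 0 < L) (hw : (List.ofFn w).prod ∈ I) (n : ℕ) :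
    ∃ J, (∀ i < J, block x L i ≠ w) ∧ wordLength T (walkProd x n) ≤ M + L * (J + 1) := by
  classical
  have hex : ∃ J, n < L * J + L ∨ block x L J = w := ⟨n, Or.inl (by nlinarith)⟩
  refine ⟨Nat.find hex, fun i hi => (not_or.mp (Nat.find_min hex hi)).2, ?_⟩
  by_cases hn : n < L * Nat.find hex + L
  · linarith [wordLength_walkProd_le (T := T) hx n]
  · have := wordLength_walkProd_le_of_block_eq hgen hideal hM hx hw
      ((Nat.find_spec hex).resolve_left hn) (not_lt.mp hn)
    linarith

end Walk

lemma lintegral_tsum_indicator_le {Ω : Type*} [MeasurableSpace Ω] (μ : Measure Ω)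
    (C : ℕ → Set Ω) : ∫⁻ ω, ∑' j, (C j).indicator 1 ω ∂μ ≤ ∑' j, μ (C j) :=
  calc ∫⁻ ω, ∑' j, (C j).indicator 1 ω ∂μ
      ≤ ∫⁻ ω, ∑' j, (toMeasurable μ (C j)).indicator 1 ω ∂μ :=
        lintegral_mono fun ω => ENNReal.tsum_le_tsum fun j =>
          Set.indicator_le_indicator_of_subset (subset_toMeasurable μ _) (by simp) ω
    _ = ∑' j, μ (C j) := by
        rw [lintegral_tsum fun j =>
          (measurable_one.indicator (measurableSet_toMeasurable μ _)).aemeasurable]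
        simp [lintegral_indicator_one (measurableSet_toMeasurable μ _)]

lemma natCast_add_one_le_tsum_indicator {Ω : Type*} {C : ℕ → Set Ω} {ω : Ω} {J : ℕ}
    (h : ∀ j ≤ J, ω ∈ C j) : ((J : ℝ≥0∞) + 1) ≤ ∑' j, (C j).indicator 1 ω :=
  calc ((J : ℝ≥0∞) + 1) = ∑ j ∈ Finset.range (J + 1), (C j).indicator 1 ω := by
        rw [Finset.sum_congr rfl fun j hj =>
          Set.indicator_of_mem (h j (Finset.mem_range_succ_iff.mp hj)) (1 : Ω → ℝ≥0∞)]
        simp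
    _ ≤ _ := ENNReal.sum_le_tsum _

lemma natCast_pow_sub_one_mul_inv_pow_lt_one {d : ℕ} (hd : 0 < d) (L : ℕ) :
    ((d ^ L - 1 : ℕ) : ℝ≥0∞) * (d : ℝ≥0∞)⁻¹ ^ L < 1 := by
  rw [← ENNReal.inv_pow, ← div_eq_mul_inv,
    ENNReal.div_lt_iff (Or.inl (by positivity)) (Or.inl (by simp)), one_mul, ← Nat.cast_pow]
  exact_mod_cast Nat.sub_lt (Nat.pow_pos hd) one_pos

section RandomWalk

variable {S Ω : Type*} [MeasurableSpace Ω] {μ : Measure Ω}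

lemma measure_forall_eq_le_of_iIndepFun {ι : Type*} [Fintype ι] {X : ι → Ω → S}
    (hindep : iIndepFun (m := fun _ => (⊤ : MeasurableSpace S)) X μ) {p : ℝ≥0∞}
    (hp : ∀ i t, μ {ω | X i ω = t} ≤ p) (v : ι → S) :
    μ {ω | ∀ i, X i ω = v i} ≤ p ^ Fintype.card ι := by
  have hset : {ω | ∀ i, X i ω = v i} = ⋂ i, X i ⁻¹' {v i} := by ext; simp
  rw [hset, hindep.meas_iInter fun i => ⟨{v i}, MeasurableSpace.measurableSet_top, rfl⟩]
  exact Finset.prod_le_pow_card _ _ _ fun i _ => hp i (v i)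

variable {T : Finset S} {X : ℕ → Ω → S}

/-- A union bound over the `(|T| ^ L - 1) ^ j` admissible patterns of the first `j` blocks: the
`X i` need not be measurable, so independence is only used on cylinder sets. -/
lemma measure_forall_block_ne_le (hindep : iIndepFun (m := fun _ => (⊤ : MeasurableSpace S)) X μ)
    {p : ℝ≥0∞} (hp : ∀ i t, μ {ω | X i ω = t} ≤ p) (hmem : ∀ i ω, X i ω ∈ T)
    {L : ℕ} {w : Fin L → S} (hw : ∀ t, w t ∈ T) (j : ℕ) :
    μ {ω | ∀ i < j, block (X · ω) L i ≠ w} ≤ (((T.card ^ L - 1 : ℕ) : ℝ≥0∞) * p ^ L) ^ j := by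
  classical
  set bad : Finset (Fin L → S) := (Fintype.piFinset fun _ => T).erase w
  have hbad : bad.card = T.card ^ L - 1 := by
    rw [Finset.card_erase_of_mem (Fintype.mem_piFinset.mpr hw), Fintype.card_piFinset]
    simp
  have hinj : Function.Injective fun q : Fin j × Fin L => L * q.1 + q.2 := by
    have : (fun q : Fin j × Fin L => L * q.1 + q.2) = fun q => (finProdFinEquiv q : ℕ) := by
      ext q; simp [finProdFinEquiv, add_comm]
    exact this ▸ Fin.val_injective.comp finProdFinEquiv.injective
  have hcover : {ω | ∀ i < j, block (X · ω) L i ≠ w} ⊆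
      ⋃ v ∈ Fintype.piFinset fun _ : Fin j => bad,
        {ω | ∀ q : Fin j × Fin L, X (L * q.1 + q.2) ω = v q.1 q.2} := by
    intro ω hω
    simp only [Set.mem_iUnion]
    refine ⟨fun i => block (X · ω) L i, ?_, fun q => rfl⟩
    refine Fintype.mem_piFinset.mpr fun i => Finset.mem_erase.mpr ⟨hω i i.isLt, ?_⟩
    exact Fintype.mem_piFinset.mpr fun t => hmem _ ω
  calc _ ≤ ∑ v ∈ Fintype.piFinset fun _ : Fin j => bad,
        μ {ω | ∀ q : Fin j × Fin L, X (L * q.1 + q.2) ω = v q.1 q.2} :=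
        (measure_mono hcover).trans (measure_biUnion_finset_le _ _)
    _ ≤ ∑ v ∈ Fintype.piFinset fun _ : Fin j => bad, p ^ (j * L) := by
        gcongr with v
        simpa using measure_forall_eq_le_of_iIndepFun (hindep.precomp hinj)
          (fun q => hp _) fun q => v q.1 q.2
    _ = _ := by simp [hbad, mul_pow, ← pow_mul, mul_comm L j]

lemma measure_eq_le_inv_card (hmem : ∀ i ω, X i ω ∈ T)
    (hunif : ∀ i, ∀ t ∈ T, μ {ω | X i ω = t} = 1 / T.card) (i : ℕ) (t : S) :
    μ {ω | X i ω = t} ≤ (T.card : ℝ≥0∞)⁻¹ := by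
  by_cases ht : t ∈ T
  · rw [hunif i t ht, one_div]
  · have hempty : {ω | X i ω = t} = ∅ :=
      Set.eq_empty_of_forall_notMem fun ω h => ht (Set.mem_ofPred.mp h ▸ hmem i ω)
    simp [hempty]

lemma lintegral_wordLength_walkProd_le [Monoid S] [IsProbabilityMeasure μ] {I : Set S} {M L : ℕ}
    {w : Fin L → S} (hgen : Submonoid.closure (T : Set S) = ⊤)
    (hideal : ∀ a ∈ I, ∀ s : S, a * s ∈ I) (hM : ∀ a ∈ I, wordLength T a ≤ M)
    (hmem : ∀ i ω, X i ω ∈ T) (hL : 0 < L) (hw : (List.ofFn w).prod ∈ I) (n : ℕ) :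
    ∫⁻ ω, (wordLength T (walkProd (X · ω) n) : ℝ≥0∞) ∂μ ≤
      M + L * ∑' j, μ {ω | ∀ i < j, block (X · ω) L i ≠ w} := by
  set C : ℕ → Set Ω := fun j => {ω | ∀ i < j, block (X · ω) L i ≠ w}
  have hpointwise : ∀ ω, (wordLength T (walkProd (X · ω) n) : ℝ≥0∞) ≤
      M + L * ∑' j, (C j).indicator 1 ω := by
    intro ω
    obtain ⟨J, hJ, hlen⟩ := exists_wordLength_walkProd_le hgen hideal hM (hmem · ω) hL hw n
    calc _ ≤ ((M + L * (J + 1) : ℕ) : ℝ≥0∞) := by exact_mod_cast hlen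
      _ ≤ M + L * ∑' j, (C j).indicator 1 ω := by
        push_cast
        gcongr
        exact natCast_add_one_le_tsum_indicator fun j hj i hi => hJ i (hi.trans_le hj)
  calc _ ≤ ∫⁻ ω, M + L * ∑' j, (C j).indicator 1 ω ∂μ := lintegral_mono hpointwise
    _ = M + L * ∫⁻ ω, ∑' j, (C j).indicator 1 ω ∂μ := by
        rw [lintegral_add_left measurable_const, lintegral_const_mul' _ _ (by simp),
          lintegral_const, measure_univ, mul_one]
    _ ≤ M + L * ∑' j, μ (C j) := by grw [lintegral_tsum_indicator_le μ C]

end RandomWalk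

/-- If a finitely generated semigroup (monoid) contains a finite nonempty right
ideal, then the expected word length `E[|R_n|]` of the simple random walk is
bounded uniformly in `n`. -/
theorem stmt5 {S : Type*} [Monoid S] (T : Finset S) (hT : T.Nonempty)
    (hgen : Submonoid.closure (T : Set S) = ⊤)
    (I : Set S) (hIfin : I.Finite) (hIne : I.Nonempty)
    (hideal : ∀ a ∈ I, ∀ s : S, a * s ∈ I)
    {Ω : Type*} [MeasurableSpace Ω] (μ : Measure Ω) [IsProbabilityMeasure μ]
    (X : ℕ → Ω → S)
    (hmem : ∀ i ω, X i ω ∈ T)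
    (hunif : ∀ i, ∀ t ∈ T, μ {ω | X i ω = t} = 1 / T.card)
    (hindep : iIndepFun (m := fun _ => (⊤ : MeasurableSpace S)) X μ) :
    ∃ C : ℝ≥0∞, C ≠ ⊤ ∧ ∀ n : ℕ,
      ∫⁻ ω, (wordLength T (((List.range n).map (fun i => X i ω)).prod) : ℝ≥0∞) ∂μ ≤ C := by
  obtain ⟨M, hM⟩ := (hIfin.image (wordLength T)).bddAbove
  obtain ⟨L, hL, w, hwT, hwI⟩ := exists_pos_length_word_prod_mem hgen hT hideal hIne
  set q := ((T.card ^ L - 1 : ℕ) : ℝ≥0∞) * (T.card : ℝ≥0∞)⁻¹ ^ L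
  have hq : q < 1 := natCast_pow_sub_one_mul_inv_pow_lt_one (Finset.card_pos.mpr hT) L
  refine ⟨M + L * ∑' j, q ^ j,
    ENNReal.add_ne_top.2 ⟨by simp, ENNReal.mul_ne_top (by simp) (tsum_geometric_lt_top.2 hq).ne⟩,
    fun n => ?_⟩
  calc _ ≤ M + L * ∑' j, μ {ω | ∀ i < j, block (X · ω) L i ≠ w} :=
        lintegral_wordLength_walkProd_le hgen hideal (fun a ha => hM ⟨a, ha, rfl⟩) hmem hL hwI n
    _ ≤ M + L * ∑' j, q ^ j := by
        gcongr with j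
        exact measure_forall_block_ne_le hindep (measure_eq_le_inv_card hmem hunif) hmem hwT j
end

section
/- Let Σ be an alphabet of size d ≥ 2, n ∈ ℕ, k ≤ n/2, and let X_1,…,X_n be i.i.d. uniform random letters from Σ. Let g : Σ* → Σ^k be any function. Then Pr(∃ j with 1 ≤ j ≤ n−k such that X_{j+1}⋯X_{j+k} = g(X_1⋯X_j)) ≥ 1/(4(d^k/n + 1)). -/
/-!
Let `A_j` be the event that the window after position `j` matches `g` of the prefix. The `k`
letters of that window are dictated by the prefix, so `P(A_j) = d⁻ᵏ` and the expected number
of matches among `j ∈ [1, M]`, `M = n - k`, is `M d⁻ᵏ`. Split the sample space by the first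
match `i`: that event depends only on the first `i + k` letters, and a further match at `j > i`
dictates `min (j - i) k` letters beyond them, so it has conditional probability at most
`d^(-min (j - i) k)`. Summing over `j`, a sample with at least one match has at most
`2 + M d⁻ᵏ` matches on average, whence `M d⁻ᵏ ≤ (2 + M d⁻ᵏ) P(∃ j, A_j)`, and `M ≥ n / 2`
gives the bound.
-/

open Finset Function

section FirstHit

variable {ι α : Type*} [LinearOrder ι] [DecidableEq α] (s : Finset ι) (A : ι → Finset α)

def firstHit (i : ι) : Finset α :=
  A i \ {i' ∈ s | i' < i}.biUnion A

variable {s A}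

lemma mem_firstHit {i : ι} {x : α} :
    x ∈ firstHit s A i ↔ x ∈ A i ∧ ∀ i' ∈ s, i' < i → x ∉ A i' := by
  simp [firstHit]

lemma pairwiseDisjoint_firstHit : (s : Set ι).PairwiseDisjoint (firstHit s A) := by
  have key : ∀ i ∈ s, ∀ j, i < j → Disjoint (firstHit s A i) (firstHit s A j) :=
    fun i hi j hij => disjoint_left.2 fun x hx hx' =>
      (mem_firstHit.1 hx').2 i hi hij (mem_firstHit.1 hx).1
  intro i hi j hj hij
  rcases hij.lt_or_gt with h | h
  · exact key i hi j h
  · exact (key j hj i h).symm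

lemma exists_mem_firstHit {j : ι} {x : α} (hj : j ∈ s) (hx : x ∈ A j) :
    ∃ i ∈ s, i ≤ j ∧ x ∈ firstHit s A i := by
  have hne : {i ∈ s | x ∈ A i}.Nonempty := ⟨j, mem_filter.2 ⟨hj, hx⟩⟩
  obtain ⟨hmin, hxmin⟩ := mem_filter.1 (min'_mem _ hne)
  refine ⟨_, hmin, min'_le _ _ (mem_filter.2 ⟨hj, hx⟩), mem_firstHit.2 ⟨hxmin, ?_⟩⟩
  intro i' hi' hlt hxi'
  exact (min'_le _ _ (mem_filter.2 ⟨hi', hxi'⟩)).not_gt hlt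

lemma biUnion_firstHit : s.biUnion (firstHit s A) = s.biUnion A := by
  ext x
  simp only [mem_biUnion]
  constructor
  · rintro ⟨i, hi, hx⟩
    exact ⟨i, hi, (mem_firstHit.1 hx).1⟩
  · rintro ⟨j, hj, hx⟩
    obtain ⟨i, hi, -, hxi⟩ := exists_mem_firstHit hj hx
    exact ⟨i, hi, hxi⟩

lemma card_eq_sum_card_firstHit_inter {j : ι} (hj : j ∈ s) :
    #(A j) = ∑ i ∈ s, #(firstHit s A i ∩ A j) := by
  have hA : A j = s.biUnion (fun i => firstHit s A i ∩ A j) := by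
    ext x
    simp only [mem_biUnion, mem_inter]
    constructor
    · intro hx
      obtain ⟨i, hi, -, hxi⟩ := exists_mem_firstHit hj hx
      exact ⟨i, hi, hxi, hx⟩
    · rintro ⟨-, -, -, hx⟩
      exact hx
  rw [← card_biUnion (pairwiseDisjoint_firstHit.mono fun i => inter_subset_left), ← hA]

lemma firstHit_inter_eq_empty {i j : ι} (hj : j ∈ s) (hji : j < i) :
    firstHit s A i ∩ A j = ∅ :=
  disjoint_iff_inter_eq_empty.1 <| disjoint_left.2 fun _ hx => (mem_firstHit.1 hx).2 j hj hji

theorem sum_card_le_mul_card_biUnion (C : ℝ)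
    (h : ∀ i ∈ s,
      ∑ j ∈ s with i ≤ j, (#(firstHit s A i ∩ A j) : ℝ) ≤ C * #(firstHit s A i)) :
    ∑ j ∈ s, (#(A j) : ℝ) ≤ C * #(s.biUnion A) := by
  have hlate : ∀ i ∈ s, ∑ j ∈ s, (#(firstHit s A i ∩ A j) : ℝ)
      = ∑ j ∈ s with i ≤ j, (#(firstHit s A i ∩ A j) : ℝ) := by
    intro i _
    rw [sum_filter]
    refine sum_congr rfl fun j hj => ?_
    split_ifs with hij
    · rfl
    · rw [firstHit_inter_eq_empty hj (not_le.1 hij), card_empty, Nat.cast_zero]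
  calc ∑ j ∈ s, (#(A j) : ℝ)
      = ∑ i ∈ s, ∑ j ∈ s, (#(firstHit s A i ∩ A j) : ℝ) := by
        rw [sum_comm]
        exact sum_congr rfl fun j hj => by exact_mod_cast card_eq_sum_card_firstHit_inter hj
    _ ≤ ∑ i ∈ s, C * #(firstHit s A i) :=
        sum_le_sum fun i hi => (hlate i hi).trans_le (h i hi)
    _ = C * #(s.biUnion A) := by
        rw [← mul_sum, ← biUnion_firstHit, card_biUnion pairwiseDisjoint_firstHit, Nat.cast_sum]

lemma dependsOn_mem_firstHit {κ β : Type*} [DecidableEq (κ → β)] {A : ι → Finset (κ → β)}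
    {S : Set κ} {i : ι} (hA : ∀ i' ≤ i, DependsOn (· ∈ A i') S) :
    DependsOn (· ∈ firstHit s A i) S := by
  intro x y hxy
  simp only [eq_iff_iff]
  rw [mem_firstHit, mem_firstHit, show x ∈ A i ↔ y ∈ A i from (hA i le_rfl hxy).to_iff]
  refine and_congr_right fun _ => forall₂_congr fun i' _ => imp_congr_right fun hi' => ?_
  rw [show x ∈ A i' ↔ y ∈ A i' from (hA i' hi'.le hxy).to_iff]

end FirstHit

section CoordinateRules

variable {A : Type*}

lemma card_filter_apply_eq_mul_card [Fintype A] [DecidableEq A] {ι : Type*} [DecidableEq ι]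
    (S : Finset (ι → A)) (r : ι) (f : (ι → A) → A) (hS : DependsOn (· ∈ S) {r}ᶜ)
    (hf : DependsOn f {r}ᶜ) :
    #{ω ∈ S | ω r = f ω} * Fintype.card A = #S := by
  have hupd : ∀ (ω : ι → A) (x : A), ∀ i ∈ ({r}ᶜ : Set ι), update ω r x i = ω i :=
    fun ω x i hi => update_of_ne hi x ω
  rw [← card_univ, ← card_product]
  refine card_nbij' (fun p => update p.1 r p.2) (fun ω => (update ω r (f ω), ω r)) ?_ ?_ ?_ ?_
  · rintro ⟨ω, x⟩ hp
    simp only [coe_product, Set.mem_prod, mem_coe, mem_filter] at hp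
    exact mem_coe.2 ((hS (hupd ω x)).to_iff.2 hp.1.1)
  · intro ω hω
    have hfω : f (update ω r (f ω)) = f ω := hf (hupd ω _)
    simp only [coe_product, Set.mem_prod, mem_coe, mem_filter, coe_univ, Set.mem_univ, and_true]
    exact ⟨(hS (hupd ω _)).to_iff.2 hω, by rw [update_self, hfω]⟩
  · rintro ⟨ω, x⟩ hp
    simp only [coe_product, Set.mem_prod, mem_coe, mem_filter] at hp
    have hfω : f (update ω r x) = ω r := (hf (hupd ω x)).trans hp.1.2.symm
    simp only [update_idem, update_self, hfω, update_eq_self]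
  · intro ω _
    simp only [update_idem, update_eq_self]

variable {n : ℕ}

def FollowsRule (F : Fin n → (Fin n → A) → A) (a m : ℕ) (ω : Fin n → A) : Prop :=
  ∀ r : Fin n, a ≤ r → r < a + m → ω r = F r ω

lemma followsRule_succ_iff {F : Fin n → (Fin n → A) → A} {a m : ℕ} (ham : a + m < n)
    {ω : Fin n → A} :
    FollowsRule F a (m + 1) ω ↔
      FollowsRule F a m ω ∧ ω ⟨a + m, ham⟩ = F ⟨a + m, ham⟩ ω := by
  refine ⟨fun h => ⟨fun i hi hi' => h i hi (by omega), h _ (by simp) (by simp)⟩,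
    fun ⟨h, hr⟩ i hi hi' => ?_⟩
  rcases Nat.lt_succ_iff_lt_or_eq.1 hi' with h' | h'
  · exact h i hi h'
  · obtain rfl : i = ⟨a + m, ham⟩ := Fin.ext h'
    exact hr

lemma FollowsRule.mono {F : Fin n → (Fin n → A) → A} {a m a' m' : ℕ} {ω : Fin n → A}
    (h : FollowsRule F a m ω) (ha : a ≤ a') (hm : a' + m' ≤ a + m) : FollowsRule F a' m' ω :=
  fun r h1 h2 => h r (by omega) (by omega)

variable [Fintype A] [DecidableEq A]

instance (F : Fin n → (Fin n → A) → A) (a m : ℕ) : DecidablePred (FollowsRule F a m) :=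
  fun _ => by unfold FollowsRule; infer_instance

theorem card_filter_followsRule_mul_pow (E : Finset (Fin n → A))
    (F : Fin n → (Fin n → A) → A) (a m : ℕ) (ham : a + m ≤ n)
    (hE : DependsOn (· ∈ E) {i | (i : ℕ) < a})
    (hF : ∀ r : Fin n, a ≤ r → r < a + m → DependsOn (F r) {i | i < r}) :
    #{ω ∈ E | FollowsRule F a m ω} * Fintype.card A ^ m = #E := by
  induction m with
  | zero =>
    rw [filter_true_of_mem fun ω _ r _ h => absurd h (by omega), pow_zero, mul_one]
  | succ m ih =>
    have hr : a + m < n := by omega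
    set S := {ω ∈ E | FollowsRule F a m ω}
    have hsplit : {ω ∈ E | FollowsRule F a (m + 1) ω}
        = {ω ∈ S | ω ⟨a + m, hr⟩ = F ⟨a + m, hr⟩ ω} := by
      ext ω
      simp only [S, mem_filter, followsRule_succ_iff hr, and_assoc]
    have hS : DependsOn (· ∈ S) {⟨a + m, hr⟩}ᶜ := by
      intro x y hxy
      have hbelow : ∀ i : Fin n, (i : ℕ) < a + m → x i = y i :=
        fun i hi => hxy i fun hir => by simp [Set.mem_singleton_iff.1 hir] at hi
      have hFol : FollowsRule F a m x ↔ FollowsRule F a m y :=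
        forall₃_congr fun i _ hi => by
          rw [hbelow i hi,
            hF i (by omega) (by omega) fun i' hi' => hbelow i' (by simp at hi' ⊢; omega)]
      have hEmem : x ∈ E ↔ y ∈ E := (hE fun i hi => hbelow i (by simp at hi; omega)).to_iff
      simp only [S, mem_filter, hFol, hEmem]
    have hFr : DependsOn (F ⟨a + m, hr⟩) {⟨a + m, hr⟩}ᶜ :=
      (hF _ (by simp) (by simp)).mono fun i hi hir => ne_of_lt hi (Set.mem_singleton_iff.1 hir)
    rw [hsplit, pow_succ, ← mul_assoc, mul_right_comm,
      card_filter_apply_eq_mul_card S _ _ hS hFr, ih (by omega) fun r' h1 h2 => hF r' h1 (by omega)]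

end CoordinateRules

lemma sum_inv_pow_min_le {q : ℝ} (hq : 2 ≤ q) (k L : ℕ) :
    ∑ t ∈ range L, (q ^ min t k)⁻¹ ≤ 2 + L * (q ^ k)⁻¹ := by
  have hterm : ∀ t ∈ range L, (q ^ min t k)⁻¹ ≤ (1 / 2) ^ t + (q ^ k)⁻¹ := by
    intro t _
    rcases le_total t k with htk | hkt
    · have h2q : (2 : ℝ) ^ t ≤ q ^ t := pow_le_pow_left₀ zero_le_two hq t
      rw [min_eq_left htk, one_div, inv_pow]
      exact le_add_of_le_of_nonneg (inv_anti₀ (by positivity) h2q) (by positivity)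
    · rw [min_eq_right hkt]
      exact le_add_of_nonneg_left (by positivity)
  calc ∑ t ∈ range L, (q ^ min t k)⁻¹
      ≤ ∑ t ∈ range L, ((1 / 2) ^ t + (q ^ k)⁻¹) := sum_le_sum hterm
    _ = ∑ t ∈ range L, (1 / 2 : ℝ) ^ t + L * (q ^ k)⁻¹ := by
        rw [sum_add_distrib, sum_const, card_range, nsmul_eq_mul]
    _ ≤ 2 + L * (q ^ k)⁻¹ := by linarith [sum_geometric_two_le L]

section Matches

variable {A : Type*} {n k : ℕ} (g : List A → List A)

lemma dependsOn_take_ofFn (m : ℕ) :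
    DependsOn (fun ω : Fin n → A => (List.ofFn ω).take m) {i | (i : ℕ) < m} := by
  intro x y hxy
  refine List.ext_getElem (by simp) fun r h1 _ => ?_
  simp only [List.length_take, List.length_ofFn] at h1
  simp only [List.getElem_take, List.getElem_ofFn]
  exact hxy _ (show r < m by omega)

/-- The letter that a match at `j` dictates at position `r`; the default `x₀` is only read
outside the window `[j, j + k)`. -/
def matchRule (j : ℕ) (x₀ : A) (r : Fin n) (ω : Fin n → A) : A :=
  (g ((List.ofFn ω).take j)).getD (r - j) x₀

lemma dependsOn_matchRule {j : ℕ} (x₀ : A) {r : Fin n} (hr : j ≤ r) :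
    DependsOn (matchRule g j x₀ r) {i | i < r} := fun x y hxy => by
  simp only [matchRule, dependsOn_take_ofFn j fun i hi => hxy i (show (i : ℕ) < r by
    simp only [Set.mem_ofPred_eq] at hi; omega)]

variable [Fintype A] [DecidableEq A]

def matchSet (n k : ℕ) (g : List A → List A) (j : ℕ) : Finset (Fin n → A) :=
  {ω | ((List.ofFn ω).drop j).take k = g ((List.ofFn ω).take j)}

lemma dependsOn_mem_matchSet (j : ℕ) :
    DependsOn (· ∈ matchSet n k g j) {i | (i : ℕ) < j + k} := by
  have key : ∀ ω : Fin n → A, ω ∈ matchSet n k g j ↔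
      ((List.ofFn ω).take (j + k)).drop j = g (((List.ofFn ω).take (j + k)).take j) := by
    simp [matchSet, List.take_drop, List.take_take]
  intro x y hxy
  simp only [key, dependsOn_take_ofFn (j + k) hxy]

lemma mem_matchSet_iff_followsRule (hg : ∀ l, (g l).length = k) {j : ℕ} (hjk : j + k ≤ n)
    (x₀ : A) {ω : Fin n → A} :
    ω ∈ matchSet n k g j ↔ FollowsRule (matchRule g j x₀) j k ω := by
  simp only [matchSet, mem_filter, mem_univ, true_and, List.ext_getElem_iff, List.length_take,
    List.length_drop, List.length_ofFn, hg, List.getElem_take, List.getElem_drop,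
    List.getElem_ofFn]
  constructor
  · rintro ⟨-, h⟩ r hr1 hr2
    rw [matchRule, List.getD_eq_getElem _ _ (by rw [hg]; omega),
      ← h (r - j) (by omega) (by omega)]
    congr
    ext
    simp only
    omega
  · intro h
    refine ⟨by omega, fun r h1 h2 => ?_⟩
    rw [h ⟨j + r, by omega⟩ (by simp) (by simp; omega), matchRule,
      List.getD_eq_getElem _ _ (by rw [hg]; simp only; omega)]
    simp

lemma card_matchSet_mul_pow [Nonempty A] (hg : ∀ l, (g l).length = k) {j : ℕ}
    (hjk : j + k ≤ n) :
    #(matchSet n k g j) * Fintype.card A ^ k = Fintype.card A ^ n := by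
  let x₀ : A := Classical.arbitrary A
  have hset : matchSet n k g j
      = ({ω | FollowsRule (matchRule g j x₀) j k ω} : Finset (Fin n → A)) := by
    ext ω
    rw [mem_matchSet_iff_followsRule g hg hjk x₀, mem_filter, and_iff_right (mem_univ ω)]
  rw [hset, card_filter_followsRule_mul_pow univ _ j k hjk (fun _ _ _ => by simp only [mem_univ])
    fun r hr _ => dependsOn_matchRule g x₀ hr, card_univ, Fintype.card_fun, Fintype.card_fin]

/-- Once the first match at `i` is fixed, a later match at `j` still has to dictate the
`min (j - i) k` letters it does not share with the window of `i`. -/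
lemma card_firstHit_inter_matchSet_mul_pow_le [Nonempty A] (hg : ∀ l, (g l).length = k)
    (s : Finset ℕ) {i j : ℕ} (hij : i ≤ j) (hjk : j + k ≤ n) :
    #(firstHit s (matchSet n k g) i ∩ matchSet n k g j) * Fintype.card A ^ min (j - i) k
      ≤ #(firstHit s (matchSet n k g) i) := by
  let x₀ : A := Classical.arbitrary A
  set B := firstHit s (matchSet n k g) i
  have hB : DependsOn (· ∈ B) {r : Fin n | (r : ℕ) < max (i + k) j} :=
    dependsOn_mem_firstHit fun i' hi' => (dependsOn_mem_matchSet g i').mono fun r hr => by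
      simp only [Set.mem_ofPred_eq] at hr ⊢; omega
  have hsub : B ∩ matchSet n k g j
      ⊆ {ω ∈ B | FollowsRule (matchRule g j x₀) (max (i + k) j) (min (j - i) k) ω} := by
    intro ω hω
    rw [mem_inter, mem_matchSet_iff_followsRule g hg hjk x₀] at hω
    exact mem_filter.2 ⟨hω.1, hω.2.mono (le_max_right _ _) (by omega)⟩
  calc #(B ∩ matchSet n k g j) * Fintype.card A ^ min (j - i) k
      ≤ #{ω ∈ B | FollowsRule (matchRule g j x₀) (max (i + k) j) (min (j - i) k) ω}
          * Fintype.card A ^ min (j - i) k := Nat.mul_le_mul_right _ (card_le_card hsub)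
    _ = #B := card_filter_followsRule_mul_pow B _ _ _ (by omega) hB
        fun r hr _ => dependsOn_matchRule g x₀ (by omega)

lemma sum_card_firstHit_inter_matchSet_le (hA : 2 ≤ Fintype.card A)
    (hg : ∀ l, (g l).length = k) {M i : ℕ} (hMn : M + k ≤ n) (hi : 1 ≤ i) :
    ∑ j ∈ Icc 1 M with i ≤ j,
        (#(firstHit (Icc 1 M) (matchSet n k g) i ∩ matchSet n k g j) : ℝ)
      ≤ (2 + M * ((Fintype.card A : ℝ) ^ k)⁻¹) * #(firstHit (Icc 1 M) (matchSet n k g) i) := by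
  have : Nonempty A := Fintype.card_pos_iff.1 (by omega)
  set B := firstHit (Icc 1 M) (matchSet n k g) i
  set q : ℝ := (Fintype.card A : ℝ)
  have hq : (2 : ℝ) ≤ q := by simp only [q]; exact_mod_cast hA
  have hterm : ∀ j ∈ Ico i (M + 1),
      (#(B ∩ matchSet n k g j) : ℝ) ≤ #B * (q ^ min (j - i) k)⁻¹ := by
    intro j hj
    rw [mem_Ico] at hj
    have hnat := card_firstHit_inter_matchSet_mul_pow_le (n := n) g hg (Icc 1 M) hj.1 (by omega)
    rw [le_mul_inv_iff₀ (by positivity)]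
    simp only [q]
    exact_mod_cast hnat
  have hfilter : {j ∈ Icc 1 M | i ≤ j} = Ico i (M + 1) := by
    ext j
    simp only [mem_filter, mem_Icc, mem_Ico]
    omega
  have hlen : ((M + 1 - i : ℕ) : ℝ) ≤ M := by exact_mod_cast (by omega : M + 1 - i ≤ M)
  calc ∑ j ∈ Icc 1 M with i ≤ j, (#(B ∩ matchSet n k g j) : ℝ)
      ≤ ∑ j ∈ Ico i (M + 1), #B * (q ^ min (j - i) k)⁻¹ := by
        rw [hfilter]
        exact sum_le_sum hterm
    _ = #B * ∑ t ∈ range (M + 1 - i), (q ^ min t k)⁻¹ := by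
        rw [← mul_sum, sum_Ico_eq_sum_range]
        simp only [Nat.add_sub_cancel_left]
    _ ≤ #B * (2 + (M + 1 - i : ℕ) * (q ^ k)⁻¹) := by
        gcongr
        exact sum_inv_pow_min_le hq k _
    _ ≤ (2 + M * (q ^ k)⁻¹) * #B := by
        rw [mul_comm]
        gcongr

theorem mul_pow_le_mul_card_biUnion_matchSet (hA : 2 ≤ Fintype.card A)
    (hg : ∀ l, (g l).length = k) {M : ℕ} (hMn : M + k ≤ n) :
    (M : ℝ) * (Fintype.card A : ℝ) ^ n
      ≤ (2 * (Fintype.card A : ℝ) ^ k + M) * #((Icc 1 M).biUnion (matchSet n k g)) := by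
  have : Nonempty A := Fintype.card_pos_iff.1 (by omega)
  set q : ℝ := (Fintype.card A : ℝ)
  have hq : 0 < q ^ k := by positivity
  have hcount := sum_card_le_mul_card_biUnion (s := Icc 1 M) (A := matchSet n k g) _
    fun i hi => sum_card_firstHit_inter_matchSet_le g hA hg hMn (mem_Icc.1 hi).1
  have hmatch : ∀ j ∈ Icc 1 M, (#(matchSet n k g j) : ℝ) = q ^ n / q ^ k := fun j hj => by
    rw [eq_div_iff hq.ne']
    simp only [q]
    exact_mod_cast card_matchSet_mul_pow (n := n) g hg (j := j) (by rw [mem_Icc] at hj; omega)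
  rw [sum_congr rfl hmatch, sum_const, Nat.card_Icc, Nat.add_sub_cancel, nsmul_eq_mul] at hcount
  calc (M : ℝ) * q ^ n = M * (q ^ n / q ^ k) * q ^ k := by field_simp
    _ ≤ (2 + M * (q ^ k)⁻¹) * #((Icc 1 M).biUnion (matchSet n k g)) * q ^ k := by gcongr
    _ = (2 * q ^ k + M) * #((Icc 1 M).biUnion (matchSet n k g)) := by field_simp

end Matches

lemma one_div_four_mul_le_div_of_mul_le {n M Q D u : ℝ} (hn : 0 < n) (hQ : 0 < Q) (hD : 0 < D)
    (hM : M ≤ n) (hMn : n ≤ 2 * M) (h : M * D ≤ (2 * Q + M) * u) :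
    1 / (4 * (Q / n + 1)) ≤ u / D := by
  have hu : 0 ≤ u := by nlinarith
  rw [div_le_div_iff₀ (by positivity) hD]
  field_simp
  nlinarith [mul_le_mul_of_nonneg_right hMn hD.le, mul_le_mul_of_nonneg_right hM hu]

/-- Subword-appearance proposition: for a uniformly random word `X₁⋯Xₙ` over an
alphabet of size `d ≥ 2`, `k ≤ n/2`, and any prefix-dependent target
`g : Σ* → Σᵏ`, the probability that for some `1 ≤ j ≤ n−k` the block
`X_{j+1}⋯X_{j+k}` equals `g(X₁⋯X_j)` is at least `1/(4(dᵏ/n + 1))`. -/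
theorem stmt6 {A : Type*} [Fintype A] [DecidableEq A] (d n k : ℕ)
    (hcard : Fintype.card A = d) (hd : 2 ≤ d) (hn : 1 ≤ n) (hk : 2 * k ≤ n)
    (g : List A → List A) (hg : ∀ l, (g l).length = k) :
    (1 : ℝ) / (4 * ((d : ℝ) ^ k / n + 1)) ≤
      ({ω : Fin n → A | ∃ j, 1 ≤ j ∧ j ≤ n - k ∧
          ((List.ofFn ω).drop j).take k = g ((List.ofFn ω).take j)}.ncard : ℝ)
        / (d : ℝ) ^ n := by
  subst hcard
  have hU : {ω : Fin n → A | ∃ j, 1 ≤ j ∧ j ≤ n - k ∧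
      ((List.ofFn ω).drop j).take k = g ((List.ofFn ω).take j)}
        = (Icc 1 (n - k)).biUnion (matchSet n k g) := by
    ext ω
    simp [matchSet, and_assoc]
  rw [hU, Set.ncard_coe_finset]
  have hA : (0 : ℝ) < Fintype.card A := by exact_mod_cast (by omega : 0 < Fintype.card A)
  exact one_div_four_mul_le_div_of_mul_le (by exact_mod_cast hn) (by positivity) (by positivity)
    (by exact_mod_cast Nat.sub_le n k) (by exact_mod_cast (by omega : n ≤ 2 * (n - k)))
    (mul_pow_le_mul_card_biUnion_matchSet g hd hg (by omega))
end

section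
/- In the semigroup S_m with presentation ⟨x, y | x² = x, x y^j x y^{j'} x = x y^j x whenever j' ≺ j⟩ (where j' ≺ j means j' < m_k ≤ j for some k, given an increasing sequence m_1 = 1 < m_2 < …), every element has a unique normal form y^{j_0} x y^{j_1} x ⋯ y^{j_{t−1}} x y^{j_t} with j_0, j_t ≥ 0, j_1, …, j_{t−1} ≥ 1, and j_1 ⪯ j_2 ⪯ ⋯ ⪯ j_{t−1}. -/
/-- `j' ≺ j` : there is `k ≥ 1` with `j' < m k ≤ j`. -/
def mPrec (m : ℕ → ℕ) (j' j : ℕ) : Prop := ∃ k, 1 ≤ k ∧ j' < m k ∧ m k ≤ j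

/-- `j' ⪯ j` : `j' ≺ j`, or `j` and `j'` lie in a common block `[m k, m (k+1))`. -/
def mPreceq (m : ℕ → ℕ) (j' j : ℕ) : Prop :=
  mPrec m j' j ∨ ∃ k, 1 ≤ k ∧ m k ≤ j ∧ m k ≤ j' ∧ j < m (k+1) ∧ j' < m (k+1)

/-- The letter `x` (as a free monoid element over `Bool`, `true` = x). -/
def fmx : FreeMonoid Bool := FreeMonoid.of true
/-- The letter `y` (`false` = y). -/
def fmy : FreeMonoid Bool := FreeMonoid.of false

/-- The defining relations of `S_m` : `x² = x` and
`x yʲ x y^{j'} x = x yʲ x` whenever `j' ≺ j` (with `j, j' ≥ 1`). -/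
def smRel (m : ℕ → ℕ) : FreeMonoid Bool → FreeMonoid Bool → Prop := fun u v =>
  (u = fmx * fmx ∧ v = fmx) ∨
  ∃ j j', 1 ≤ j ∧ 1 ≤ j' ∧ mPrec m j' j ∧
    u = fmx * fmy ^ j * fmx * fmy ^ j' * fmx ∧ v = fmx * fmy ^ j * fmx

/-- The semigroup `S_m`. -/
abbrev SM (m : ℕ → ℕ) := (conGen (smRel m)).Quotient

/-- The word `y^{j₀} x y^{j₁} x ⋯ y^{j_{t-1}} x y^{j_t}` associated to the
exponent list `[j₀, j₁, …, j_t]` (one `x` between consecutive exponents). -/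
def nfWord : List ℕ → FreeMonoid Bool
  | [] => 1
  | [j] => fmy ^ j
  | j :: rest => fmy ^ j * fmx * nfWord rest

/-- `l = [j₀, …, j_t]` is a valid normal form: nonempty, the interior exponents
`j₁, …, j_{t-1}` are `≥ 1` and form a `⪯`-nondecreasing chain. -/
def isNF (m : ℕ → ℕ) (l : List ℕ) : Prop :=
  l ≠ [] ∧ (∀ j ∈ l.tail.dropLast, 1 ≤ j) ∧ l.tail.dropLast.Chain' (mPreceq m)

/-!
The normal form of a word is computed by reading it from right to left while keeping the
exponent list `[j₀, …, j_t]` of the normal form of the suffix read so far. Prepending `y`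
increments `j₀`. Prepending `x` does nothing if the word already starts with `x` (as `x² = x`);
otherwise it opens a new block and deletes the following interior exponents `a ≺ j₀`, each
deletion being an instance of `x yʲ x yᵃ x = x yʲ x`. This right-to-left reading is a monoid
action of the free monoid on exponent lists which respects both defining relations (the second
one because `≺` is transitive), so it only depends on the element of `S_m`. Every word is equal
in `S_m` to the word of the list it computes, and it returns every normal form unchanged; this
gives existence and uniqueness. Since `m` is strictly increasing from `m 1 = 1`, `¬ a ≺ j` is
equivalent to `j ⪯ a` for `j ≥ 1`, which is why the computed lists are `⪯`-chains.
-/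

namespace SMNormalForm

variable {m : ℕ → ℕ}

theorem mPrec_trans {a b c : ℕ} (hab : mPrec m a b) (hbc : mPrec m b c) : mPrec m a c := by
  obtain ⟨k, hk, hak, hkb⟩ := hab
  obtain ⟨k', -, hbk', hk'c⟩ := hbc
  exact ⟨k, hk, hak, by omega⟩

theorem exists_block (hm1 : m 1 = 1) (hmono : ∀ k, 1 ≤ k → m k < m (k + 1)) {j : ℕ}
    (hj : 1 ≤ j) : ∃ k, 1 ≤ k ∧ m k ≤ j ∧ j < m (k + 1) := by
  classical
  have hex : ∃ k, j < m (k + 1) := by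
    have := (strictMono_nat_of_lt_succ fun k => hmono (k + 1) (by omega)).id_le j
    exact ⟨j + 1, lt_of_le_of_lt this (hmono (j + 1) (by omega))⟩
  obtain ⟨k, hk⟩ : ∃ k, Nat.find hex = k + 1 := by
    refine Nat.exists_eq_succ_of_ne_zero fun h0 => ?_
    have := Nat.find_spec hex
    rw [h0, zero_add, hm1] at this
    omega
  have hjk := Nat.find_spec hex
  rw [hk] at hjk
  exact ⟨k + 1, by omega, not_lt.1 (Nat.find_min hex (by omega : k < Nat.find hex)), hjk⟩

theorem mPreceq_iff_not_mPrec (hm1 : m 1 = 1) (hmono : ∀ k, 1 ≤ k → m k < m (k + 1))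
    {j a : ℕ} (hj : 1 ≤ j) : mPreceq m j a ↔ ¬ mPrec m a j := by
  have hsm : StrictMonoOn m (Set.Ici 1) :=
    strictMonoOn_of_lt_add_one Set.ordConnected_Ici fun k _ hk _ => hmono k hk
  constructor
  · rintro (⟨k, -, hjk, hka⟩ | ⟨k, hk, hka, -, -, hjk⟩) ⟨k', hk', hak', hk'j⟩
    · omega
    · have hkk' : k < k' := (hsm.lt_iff_lt hk hk').1 (by omega)
      have := (hsm.le_iff_le (a := k + 1) (Set.mem_Ici.2 (by omega)) hk').2 (hkk' : k + 1 ≤ k')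
      omega
  · intro hnot
    obtain ⟨k, hk, hkj, hjk⟩ := exists_block hm1 hmono hj
    have hka : m k ≤ a := not_lt.1 fun hak => hnot ⟨k, hk, hak, hkj⟩
    rcases lt_or_ge a (m (k + 1)) with hak | hka'
    · exact Or.inr ⟨k, hk, hka, hkj, hak, hjk⟩
    · exact Or.inl ⟨k + 1, by omega, hjk, hka'⟩

/-- The condition on the exponents `[j₁, …, j_t]` after the first one in a normal form. -/
def IsNFTail (m : ℕ → ℕ) : List ℕ → Prop
  | [] => False
  | [_] => True
  | [a, _] => 1 ≤ a
  | a :: b :: c :: t => 1 ≤ a ∧ mPreceq m a b ∧ IsNFTail m (b :: c :: t)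

theorem IsNFTail.ne_nil {l : List ℕ} (h : IsNFTail m l) : l ≠ [] := by
  rintro rfl
  exact h

theorem IsNFTail.one_le {a b : ℕ} {t : List ℕ} (h : IsNFTail m (a :: b :: t)) : 1 ≤ a := by
  cases t <;> simp only [IsNFTail] at h
  exacts [h, h.1]

theorem IsNFTail.of_cons {a : ℕ} {l : List ℕ} (h : IsNFTail m (a :: l)) (hl : l ≠ []) :
    IsNFTail m l := by
  match l, h with
  | [_], _ => trivial
  | _ :: _ :: _, h => exact h.2.2

theorem isNFTail_iff : ∀ {l : List ℕ}, l ≠ [] →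
    (IsNFTail m l ↔ (∀ a ∈ l.dropLast, 1 ≤ a) ∧ l.dropLast.IsChain (mPreceq m))
  | [_], _ => by simp [IsNFTail]
  | [_, _], _ => by simp [IsNFTail]
  | a :: b :: c :: t, _ => by
    have ih := isNFTail_iff (l := b :: c :: t) (by simp)
    simp only [List.dropLast_cons_cons] at ih ⊢
    simp only [IsNFTail, ih, List.forall_mem_cons, List.isChain_cons_cons]
    tauto

theorem isNF_cons_iff {j : ℕ} {l : List ℕ} : isNF m (j :: l) ↔ l = [] ∨ IsNFTail m l := by
  show (j :: l ≠ [] ∧ (∀ a ∈ l.dropLast, 1 ≤ a) ∧ l.dropLast.IsChain (mPreceq m)) ↔ _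
  rcases eq_or_ne l [] with rfl | hl
  · simp
  · simp [isNFTail_iff hl, hl]

theorem IsNFTail.isNF {l : List ℕ} (h : IsNFTail m l) : isNF m l := by
  obtain ⟨a, t, rfl⟩ := List.exists_cons_of_ne_nil h.ne_nil
  rcases eq_or_ne t [] with rfl | ht
  · exact isNF_cons_iff.2 (Or.inl rfl)
  · exact isNF_cons_iff.2 (Or.inr (h.of_cons ht))

/-- Deletes the leading exponents `a ≺ j` of a list `[j₁, …, j_t]`, but never its last one:
the effect of the rule `x yʲ x yᵃ x → x yʲ x` on `x yʲ x y^{j₁} x ⋯ x y^{j_t}`. -/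
noncomputable def absorb (m : ℕ → ℕ) (j : ℕ) : List ℕ → List ℕ
  | [] => []
  | [a] => [a]
  | a :: b :: t => open Classical in if mPrec m a j then absorb m j (b :: t) else a :: b :: t

theorem absorb_ne_nil (j : ℕ) : ∀ {l : List ℕ}, l ≠ [] → absorb m j l ≠ []
  | [_], _ => by simp [absorb]
  | a :: b :: t, _ => by
    rw [absorb]
    split_ifs
    · exact absorb_ne_nil j (by simp)
    · simp

theorem absorb_cons_of_mPrec {j a : ℕ} {l : List ℕ} (ha : mPrec m a j) (hl : l ≠ []) :
    absorb m j (a :: l) = absorb m j l := by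
  obtain ⟨b, t, rfl⟩ := List.exists_cons_of_ne_nil hl
  rw [absorb, if_pos ha]

theorem absorb_absorb_of_mPrec {j j' : ℕ} (h : mPrec m j' j) :
    ∀ l : List ℕ, absorb m j (absorb m j' l) = absorb m j l
  | [] => rfl
  | [_] => rfl
  | a :: b :: t => by
    rw [absorb]
    split_ifs with ha
    · rw [absorb_absorb_of_mPrec h, absorb_cons_of_mPrec (mPrec_trans ha h) (by simp)]
    · rfl

theorem not_mPrec_of_absorb_eq {j a b : ℕ} {t : List ℕ} :
    ∀ {l : List ℕ}, absorb m j l = a :: b :: t → ¬ mPrec m a j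
  | c :: d :: l, h => by
    rw [absorb] at h
    split_ifs at h with hc
    · exact not_mPrec_of_absorb_eq h
    · cases h
      exact hc

theorem IsNFTail.absorb (j : ℕ) : ∀ {l : List ℕ}, IsNFTail m l → IsNFTail m (absorb m j l)
  | [_], h => h
  | a :: b :: t, h => by
    rw [SMNormalForm.absorb]
    split_ifs
    · exact (h.of_cons (by simp)).absorb j
    · exact h

theorem isNFTail_cons_absorb (hm1 : m 1 = 1) (hmono : ∀ k, 1 ≤ k → m k < m (k + 1))
    {j : ℕ} (hj : 1 ≤ j) {l : List ℕ} (hl : IsNFTail m l) : IsNFTail m (j :: absorb m j l) := by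
  have hs := hl.absorb j
  match hs' : absorb m j l, hs with
  | [_], _ => exact hj
  | a :: b :: t, hs =>
    exact ⟨hj, (mPreceq_iff_not_mPrec hm1 hmono hj).2 (not_mPrec_of_absorb_eq hs'), hs⟩

/-- The exponent list of the normal form of `b w`, given that of `w`
(the empty list stands for `[0]`). -/
noncomputable def step (m : ℕ → ℕ) : Bool → List ℕ → List ℕ
  | false, [] => [1]
  | false, j :: t => (j + 1) :: t
  | true, [] => [0, 0]
  | true, j :: t => open Classical in if j = 0 ∧ t ≠ [] then j :: t else 0 :: j :: absorb m j t

theorem step_true_cons_of_pos {j : ℕ} (hj : 1 ≤ j) (t : List ℕ) :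
    step m true (j :: t) = 0 :: j :: absorb m j t := by
  rw [step, if_neg (by omega)]

theorem exists_step_true_eq (l : List ℕ) : ∃ L ≠ [], step m true l = 0 :: L := by
  match l with
  | [] => exact ⟨[0], by simp, rfl⟩
  | j :: t =>
    rw [step]
    split_ifs with h
    · obtain ⟨rfl, ht⟩ := h
      exact ⟨t, ht, rfl⟩
    · exact ⟨j :: absorb m j t, by simp, rfl⟩

theorem step_true_step_true (l : List ℕ) : step m true (step m true l) = step m true l := by
  obtain ⟨L, hL, hl⟩ := exists_step_true_eq (m := m) l
  rw [hl, step, if_pos ⟨rfl, hL⟩]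

theorem step_true_of_isNFTail (hm1 : m 1 = 1) (hmono : ∀ k, 1 ≤ k → m k < m (k + 1))
    {l : List ℕ} (hl : IsNFTail m l) : step m true l = 0 :: l := by
  match l, hl with
  | [_], _ => rw [step, if_neg (by simp)]; rfl
  | a :: b :: t, hl =>
    rw [step_true_cons_of_pos hl.one_le]
    match t, hl with
    | [], _ => rfl
    | _ :: _, hl =>
      rw [absorb, if_neg ((mPreceq_iff_not_mPrec hm1 hmono hl.1).1 hl.2.1)]

theorem isNF_step (hm1 : m 1 = 1) (hmono : ∀ k, 1 ≤ k → m k < m (k + 1))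
    {l : List ℕ} (hl : isNF m l) (b : Bool) : isNF m (step m b l) := by
  obtain ⟨j, t, rfl⟩ := List.exists_cons_of_ne_nil hl.1
  cases b with
  | false => exact isNF_cons_iff.2 (isNF_cons_iff.1 hl)
  | true =>
    rw [step]
    split_ifs with h
    · exact hl
    refine isNF_cons_iff.2 (Or.inr ?_)
    rcases isNF_cons_iff.1 hl with rfl | ht
    · trivial
    · exact isNFTail_cons_absorb hm1 hmono
        (Nat.one_le_iff_ne_zero.2 fun h0 => h ⟨h0, ht.ne_nil⟩) ht

noncomputable def act (m : ℕ → ℕ) : FreeMonoid Bool →* Function.End (List ℕ) :=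
  FreeMonoid.lift (step m)

theorem act_mul_apply (u v : FreeMonoid Bool) (l : List ℕ) :
    act m (u * v) l = act m u (act m v l) := by
  rw [map_mul]
  rfl

theorem act_of (b : Bool) : act m (FreeMonoid.of b) = step m b := rfl

theorem act_fmx : act m fmx = step m true := rfl

theorem act_fmy_pow_cons (n j : ℕ) (t : List ℕ) : act m (fmy ^ n) (j :: t) = (n + j) :: t := by
  induction n with
  | zero => rw [pow_zero, map_one, zero_add]; rfl
  | succ n ih =>
    rw [pow_succ', act_mul_apply, ih, fmy, act_of, step, Nat.succ_add]

theorem act_eq_of_smRel {u v : FreeMonoid Bool} (h : smRel m u v) : act m u = act m v := by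
  funext l
  rcases h with ⟨rfl, rfl⟩ | ⟨j, j', hj, hj', hprec, rfl, rfl⟩
  · exact step_true_step_true l
  · obtain ⟨L, hL, hl⟩ := exists_step_true_eq (m := m) l
    simp only [act_mul_apply, act_fmx, hl, act_fmy_pow_cons, add_zero,
      step_true_cons_of_pos hj, step_true_cons_of_pos hj']
    rw [absorb_cons_of_mPrec hprec (absorb_ne_nil j' hL), absorb_absorb_of_mPrec hprec]

theorem act_eq_of_mk'_eq {u v : FreeMonoid Bool}
    (h : (conGen (smRel m)).mk' u = (conGen (smRel m)).mk' v) : act m u = act m v := by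
  have hker : conGen (smRel m) ≤ Con.ker (act m) :=
    Con.conGen_le.2 fun _ _ huv => (Con.ker_rel _).2 (act_eq_of_smRel huv)
  exact (Con.ker_rel _).1 (hker ((Con.eq _).1 h))

theorem isNF_act (hm1 : m 1 = 1) (hmono : ∀ k, 1 ≤ k → m k < m (k + 1))
    (w : FreeMonoid Bool) {l : List ℕ} (hl : isNF m l) : isNF m (act m w l) := by
  induction w using FreeMonoid.inductionOn' with
  | one => exact hl
  | of_mul b w ih =>
    rw [act_mul_apply, act_of]
    exact isNF_step hm1 hmono ih b

theorem nfWord_cons {j : ℕ} {l : List ℕ} (hl : l ≠ []) :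
    nfWord (j :: l) = fmy ^ j * fmx * nfWord l := by
  obtain ⟨a, t, rfl⟩ := List.exists_cons_of_ne_nil hl
  rfl

theorem nfWord_succ_cons (j : ℕ) (l : List ℕ) : nfWord ((j + 1) :: l) = fmy * nfWord (j :: l) := by
  rcases eq_or_ne l [] with rfl | hl
  · exact pow_succ' fmy j
  · rw [nfWord_cons hl, nfWord_cons hl, pow_succ', mul_assoc, mul_assoc, mul_assoc]

theorem mk'_fmx_mul_fmx_mul (w : FreeMonoid Bool) :
    (conGen (smRel m)).mk' (fmx * fmx * w) = (conGen (smRel m)).mk' (fmx * w) :=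
  (Con.eq _).2 <| (conGen _).mul (ConGen.Rel.of _ _ (Or.inl ⟨rfl, rfl⟩)) ((conGen _).refl w)

theorem mk'_absorb_rel {j j' : ℕ} (hj : 1 ≤ j) (hj' : 1 ≤ j') (h : mPrec m j' j)
    (w : FreeMonoid Bool) :
    (conGen (smRel m)).mk' (fmx * fmy ^ j * fmx * fmy ^ j' * fmx * w) =
      (conGen (smRel m)).mk' (fmx * fmy ^ j * fmx * w) :=
  (Con.eq _).2 <| (conGen _).mul
    (ConGen.Rel.of _ _ (Or.inr ⟨j, j', hj, hj', h, rfl, rfl⟩)) ((conGen _).refl w)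

theorem mk'_nfWord_absorb {j : ℕ} (hj : 1 ≤ j) :
    ∀ {l : List ℕ}, IsNFTail m l →
      (conGen (smRel m)).mk' (fmx * fmy ^ j * fmx * nfWord (absorb m j l)) =
        (conGen (smRel m)).mk' (fmx * fmy ^ j * fmx * nfWord l)
  | [_], _ => rfl
  | a :: b :: t, hl => by
    rw [absorb]
    split_ifs with ha
    · rw [mk'_nfWord_absorb hj (hl.of_cons (by simp)), nfWord_cons (l := b :: t) (by simp)]
      simp only [← mul_assoc]
      exact (mk'_absorb_rel hj hl.one_le ha _).symm
    · rfl

theorem mk'_nfWord_step {l : List ℕ} (hl : isNF m l) (b : Bool) :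
    (conGen (smRel m)).mk' (nfWord (step m b l)) =
      (conGen (smRel m)).mk' (FreeMonoid.of b * nfWord l) := by
  obtain ⟨j, t, rfl⟩ := List.exists_cons_of_ne_nil hl.1
  cases b with
  | false => rw [step, nfWord_succ_cons]; rfl
  | true =>
    rw [step]
    split_ifs with h
    · obtain ⟨rfl, ht⟩ := h
      rw [nfWord_cons ht, pow_zero, one_mul, ← mul_assoc]
      exact (mk'_fmx_mul_fmx_mul _).symm
    rcases isNF_cons_iff.1 hl with rfl | ht
    · rw [nfWord_cons (by simp), pow_zero, one_mul]
      rfl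
    · rw [nfWord_cons (by simp), nfWord_cons (absorb_ne_nil j ht.ne_nil), nfWord_cons ht.ne_nil,
        pow_zero, one_mul]
      simp only [← mul_assoc]
      exact mk'_nfWord_absorb (Nat.one_le_iff_ne_zero.2 fun h0 => h ⟨h0, ht.ne_nil⟩) ht

theorem mk'_nfWord_act (hm1 : m 1 = 1) (hmono : ∀ k, 1 ≤ k → m k < m (k + 1))
    (w : FreeMonoid Bool) {l : List ℕ} (hl : isNF m l) :
    (conGen (smRel m)).mk' (nfWord (act m w l)) = (conGen (smRel m)).mk' (w * nfWord l) := by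
  induction w using FreeMonoid.inductionOn' with
  | one => rw [map_one, one_mul]; rfl
  | of_mul b w ih =>
    rw [act_mul_apply, act_of, mk'_nfWord_step (isNF_act hm1 hmono w hl), map_mul, ih,
      ← map_mul, mul_assoc]

theorem act_nfWord (hm1 : m 1 = 1) (hmono : ∀ k, 1 ≤ k → m k < m (k + 1)) {l : List ℕ}
    (hl : isNF m l) : act m (nfWord l) [0] = l := by
  induction l with
  | nil => exact absurd rfl hl.1
  | cons j t ih =>
    rcases isNF_cons_iff.1 hl with rfl | ht
    · exact act_fmy_pow_cons j 0 []
    · rw [nfWord_cons ht.ne_nil, act_mul_apply, act_mul_apply, ih ht.isNF, act_fmx,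
        step_true_of_isNFTail hm1 hmono ht, act_fmy_pow_cons, add_zero]

end SMNormalForm

/-- Every element of `S_m` has a unique normal form
`y^{j₀} x y^{j₁} x ⋯ y^{j_{t-1}} x y^{j_t}` with interior exponents `≥ 1`
forming a `⪯`-nondecreasing chain. -/
theorem stmt10 (m : ℕ → ℕ) (hm1 : m 1 = 1) (hmono : ∀ k, 1 ≤ k → m k < m (k + 1))
    (a : SM m) :
    ∃! l : List ℕ, isNF m l ∧ (conGen (smRel m)).mk' (nfWord l) = a := by
  obtain ⟨w, rfl⟩ := Con.mk'_surjective a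
  have h0 : isNF m [0] := SMNormalForm.isNF_cons_iff.2 (Or.inl rfl)
  refine ⟨SMNormalForm.act m w [0], ⟨SMNormalForm.isNF_act hm1 hmono w h0, ?_⟩, ?_⟩
  · simpa [nfWord] using SMNormalForm.mk'_nfWord_act hm1 hmono w h0
  · rintro l ⟨hl, hlw⟩
    rw [← SMNormalForm.act_nfWord hm1 hmono hl, SMNormalForm.act_eq_of_mk'_eq hlw]
end

section
/- In the rewriting system on words over {x, y} with rules r: xx → x and s_{j,j'}: x y^j x y^{j'} x → x y^j x (for all j' ≺ j), every overlap ambiguity is resolvable: applying the two possible reductions to any overlapping occurrence of left-hand sides yields words that reduce to a common word. -/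
/-- One-step reduction: replace an occurrence of a left-hand side
(`xx` or `x yʲ x y^{j'} x` with `j' ≺ j`) by the corresponding right-hand side. -/
def smRed (m : ℕ → ℕ) (u v : FreeMonoid Bool) : Prop :=
  ∃ a b u' v', smRel m u' v' ∧ u = a * u' * b ∧ v = a * v' * b

/-! Every left-hand side begins and ends with `x`, and none is a proper factor of another, so
two redexes in a word are disjoint, coincide, or overlap in a nonempty proper suffix of the first
that is a proper prefix of the second. A shared `x` resolves because every right-hand side also
begins and ends with `x`: writing `r₁ = r₁' x` and `r₂ = x r₂'`, both reducts reduce to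
`r₁' x r₂'`. The only other overlap is `x yʲ x y^{j'} x y^{j''} x`, whose two reducts both reduce
to `x yʲ x`, one of them because `j'' ≺ j' ≺ j` gives `j'' ≺ j`. -/

open Relation

theorem List.eq_replicate_or_of_append_cons_eq {α : Type*} {a b : α} (hab : a ≠ b) {n : ℕ}
    {q s u : List α} (h : q ++ b :: s = replicate n a ++ b :: u) :
    q = replicate n a ∧ s = u ∨ ∃ q', q = replicate n a ++ b :: q' ∧ q' ++ b :: s = u := by
  induction n generalizing q with
  | zero => cases q <;> simp_all
  | succ n ih =>
    cases q with
    | nil => simp [replicate_succ, hab.symm] at h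
    | cons c q =>
      simp only [replicate_succ, cons_append, cons.injEq] at h ⊢
      simpa [h.1] using ih h.2

namespace FreeMonoid

variable {α : Type*}

theorem mul_eq_mul_iff {a b c d : FreeMonoid α} :
    a * b = c * d ↔ (∃ e, c = a * e ∧ b = e * d) ∨ ∃ e, a = c * e ∧ d = e * b :=
  List.append_eq_append_iff

def Rewrites (R : FreeMonoid α → FreeMonoid α → Prop) (u v : FreeMonoid α) : Prop :=
  ∃ a b l r, R l r ∧ u = a * l * b ∧ v = a * r * b

variable {R : FreeMonoid α → FreeMonoid α → Prop} {l r l₁ r₁ l₂ r₂ u v w : FreeMonoid α}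

theorem Rewrites.mul_rel_mul (a : FreeMonoid α) (h : R l r) (b : FreeMonoid α) :
    Rewrites R (a * l * b) (a * r * b) :=
  ⟨a, b, l, r, h, rfl, rfl⟩

theorem Rewrites.of_rel (h : R l r) : Rewrites R l r := by
  simpa using Rewrites.mul_rel_mul 1 h 1

theorem Rewrites.mul_mul (h : Rewrites R u v) (a b : FreeMonoid α) :
    Rewrites R (a * u * b) (a * v * b) := by
  obtain ⟨c, d, l, r, hlr, rfl, rfl⟩ := h
  simpa only [mul_assoc] using Rewrites.mul_rel_mul (a * c) hlr (d * b)

theorem join_mul_mul (h : Join (ReflTransGen (Rewrites R)) u v) (a b : FreeMonoid α) :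
    Join (ReflTransGen (Rewrites R)) (a * u * b) (a * v * b) := by
  obtain ⟨z, huz, hvz⟩ := h
  have hlift := ReflTransGen.lift (r := Rewrites R) (p := Rewrites R) (fun s ↦ a * s * b)
    fun _ _ hst ↦ hst.mul_mul a b
  exact ⟨a * z * b, hlift _ _ huz, hlift _ _ hvz⟩

theorem join_of_disjoint (h₁ : R l₁ r₁) (h₂ : R l₂ r₂) (c : FreeMonoid α) :
    Join (ReflTransGen (Rewrites R)) (r₁ * c * l₂) (l₁ * c * r₂) := by
  refine ⟨r₁ * c * r₂, .single ?_, .single ?_⟩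
  · simpa using Rewrites.mul_rel_mul (r₁ * c) h₂ 1
  · simpa [mul_assoc] using Rewrites.mul_rel_mul 1 h₁ (c * r₂)

theorem join_of_overlap_of_rhs {e f g r₁' r₂' : FreeMonoid α} (h₁ : R (e * f) (r₁' * f))
    (h₂ : R (f * g) (f * r₂')) :
    Join (ReflTransGen (Rewrites R)) (r₁' * f * g) (e * f * r₂') := by
  refine ⟨r₁' * f * r₂', .single ?_, .single ?_⟩
  · simpa [mul_assoc] using Rewrites.mul_rel_mul r₁' h₂ 1
  · simpa using Rewrites.mul_rel_mul 1 h₁ r₂'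

section CriticalPairs

variable
  (hinc : ∀ l₁ r₁ l₂ r₂ e g, R l₁ r₁ → R l₂ r₂ → l₁ = e * l₂ * g →
    Join (ReflTransGen (Rewrites R)) r₁ (e * r₂ * g))
  (hover : ∀ l₁ r₁ l₂ r₂ e f g, R l₁ r₁ → R l₂ r₂ → e ≠ 1 → f ≠ 1 → g ≠ 1 →
    l₁ = e * f → l₂ = f * g → Join (ReflTransGen (Rewrites R)) (r₁ * g) (e * r₂))
include hinc hover

theorem join_of_rel_of_mul_eq {e b₁ b₂ : FreeMonoid α} (h₁ : R l₁ r₁) (h₂ : R l₂ r₂)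
    (hu : l₁ * b₁ = e * (l₂ * b₂)) :
    Join (ReflTransGen (Rewrites R)) (r₁ * b₁) (e * r₂ * b₂) := by
  rcases mul_eq_mul_iff.1 hu with ⟨c, he, hb⟩ | ⟨f, hl₁, hfb⟩
  · subst he hb
    simpa [mul_assoc] using join_mul_mul (join_of_disjoint h₁ h₂ c) 1 b₂
  subst hl₁
  rcases mul_eq_mul_iff.1 hfb.symm with ⟨g, hl₂, hb⟩ | ⟨g, hf, hb⟩
  · subst hl₂ hb
    suffices Join (ReflTransGen (Rewrites R)) (r₁ * g) (e * r₂) by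
      simpa [mul_assoc] using join_mul_mul this 1 b₂
    by_cases he : e = 1
    · subst he
      exact Join.symm.symm _ _ (by simpa using hinc _ _ _ _ 1 g h₂ h₁ (by simp))
    by_cases hf : f = 1
    · subst hf
      simpa using join_of_disjoint h₁ h₂ 1
    by_cases hg : g = 1
    · subst hg
      simpa using hinc _ _ _ _ e 1 h₁ h₂ (by simp)
    exact hover _ _ _ _ e f g h₁ h₂ he hf hg rfl rfl
  · subst hf hb
    simpa [mul_assoc] using join_mul_mul (hinc _ _ _ _ e g h₁ h₂ (mul_assoc _ _ _).symm) 1 b₁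

theorem Rewrites.join_of_critical_pairs (huv : Rewrites R u v) (huw : Rewrites R u w) :
    Join (ReflTransGen (Rewrites R)) v w := by
  obtain ⟨a₁, b₁, l₁, r₁, h₁, rfl, rfl⟩ := huv
  obtain ⟨a₂, b₂, l₂, r₂, h₂, hu, rfl⟩ := huw
  simp only [mul_assoc] at hu
  rcases mul_eq_mul_iff.1 hu with ⟨e, rfl, he⟩ | ⟨e, rfl, he⟩
  · simpa [mul_assoc] using join_mul_mul (join_of_rel_of_mul_eq hinc hover h₁ h₂ he) a₁ 1
  · have := join_mul_mul (join_of_rel_of_mul_eq hinc hover h₂ h₁ he) a₂ 1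
    exact Join.symm.symm _ _ (by simpa [mul_assoc] using this)

end CriticalPairs

end FreeMonoid

open FreeMonoid

@[simp] theorem toList_fmx : toList fmx = [true] := rfl

@[simp] theorem toList_fmy_pow (j : ℕ) : toList (fmy ^ j) = List.replicate j false := by
  induction j with
  | zero => rfl
  | succ j ih => rw [pow_succ, toList_mul, ih, List.replicate_succ']; rfl

theorem fmx_ne_one : fmx ≠ 1 := of_ne_one true

theorem mul_fmx_mul_ne_one (q s : FreeMonoid Bool) : q * (fmx * s) ≠ 1 :=
  fun h ↦ fmx_ne_one (mul_eq_one'.1 (mul_eq_one'.1 h).2).1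

theorem fmy_pow_mul_fmx_mul_inj {i j : ℕ} {u v : FreeMonoid Bool}
    (h : fmy ^ i * (fmx * u) = fmy ^ j * (fmx * v)) : i = j ∧ u = v := by
  apply_fun toList at h
  simp only [toList_mul, toList_fmy_pow, toList_fmx, List.singleton_append] at h
  induction i generalizing j with
  | zero => cases j <;> simp_all [List.replicate_succ]
  | succ i ih => cases j <;> simp_all [List.replicate_succ]

theorem eq_fmy_pow_of_mul_fmx_mul_eq {a : ℕ} {q s u : FreeMonoid Bool}
    (h : q * (fmx * s) = fmy ^ a * (fmx * u)) :
    q = fmy ^ a ∧ s = u ∨ ∃ q', q = fmy ^ a * fmx * q' ∧ q' * (fmx * s) = u := by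
  apply_fun toList at h
  simp only [toList_mul, toList_fmy_pow, toList_fmx, List.singleton_append] at h
  rcases List.eq_replicate_or_of_append_cons_eq Bool.false_ne_true h with
    ⟨hq, hs⟩ | ⟨q', hq, hu⟩
  · exact .inl ⟨toList.injective (by simpa using hq), toList.injective hs⟩
  · exact .inr ⟨ofList q', toList.injective (by simpa using hq),
      toList.injective (by simpa using hu)⟩

theorem mul_fmx_mul_eq_fmx_mul {q s u : FreeMonoid Bool} (h : q * (fmx * s) = fmx * u) :
    q = 1 ∧ s = u ∨ ∃ q', q = fmx * q' ∧ q' * (fmx * s) = u := by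
  simpa using eq_fmy_pow_of_mul_fmx_mul_eq (a := 0) (by simpa using h)

theorem exists_eq_fmx_mul_of_fmx_mul_eq {u f g : FreeMonoid Bool} (h : fmx * u = f * g)
    (hf : f ≠ 1) : ∃ f', f = fmx * f' := by
  induction f using FreeMonoid.casesOn with
  | one => exact absurd rfl hf
  | of_mul c f' =>
    apply_fun toList at h
    simp only [toList_mul, toList_fmx, toList_of, List.cons_append, List.cons.injEq] at h
    exact ⟨f', by rw [← h.1]; rfl⟩

theorem mPrec.trans {m : ℕ → ℕ} {a b c : ℕ} (hab : mPrec m a b) (hbc : mPrec m b c) :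
    mPrec m a c := by
  obtain ⟨k, hk, hak, hkb⟩ := hab
  obtain ⟨k', -, hbk', hk'c⟩ := hbc
  exact ⟨k, hk, hak, by omega⟩

namespace smRel

variable {m : ℕ → ℕ} {l r : FreeMonoid Bool}

theorem exists_eq_fmx_mul (h : smRel m l r) : ∃ l', l = fmx * l' ∧ l' ≠ 1 := by
  rcases h with ⟨rfl, -⟩ | ⟨j, j', -, -, -, rfl, -⟩
  · exact ⟨fmx, rfl, fmx_ne_one⟩
  · exact ⟨fmy ^ j * fmx * fmy ^ j' * fmx, by simp only [mul_assoc],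
      fun h ↦ fmx_ne_one (mul_eq_one'.1 h).2⟩

theorem exists_rhs_eq_fmx_mul_and_mul_fmx (h : smRel m l r) :
    (∃ r', r = fmx * r') ∧ ∃ r', r = r' * fmx := by
  rcases h with ⟨-, rfl⟩ | ⟨j, -, -, -, -, -, rfl⟩
  · exact ⟨⟨1, by simp⟩, ⟨1, by simp⟩⟩
  · exact ⟨⟨fmy ^ j * fmx, by simp only [mul_assoc]⟩, ⟨fmx * fmy ^ j, rfl⟩⟩

theorem eq_one_or_of_eq_mul_fmx_mul {e f : FreeMonoid Bool} (h : smRel m l r)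
    (hl : l = e * (fmx * f)) (he : e ≠ 1) :
    f = 1 ∨ ∃ j j', 1 ≤ j ∧ 1 ≤ j' ∧ mPrec m j' j ∧
      e = fmx * fmy ^ j ∧ f = fmy ^ j' * fmx ∧ r = fmx * fmy ^ j * fmx := by
  rcases h with ⟨rfl, -⟩ | ⟨j, j', hj, hj', hjj, rfl, rfl⟩
  · obtain ⟨he', -⟩ | ⟨q, -, hq⟩ := mul_fmx_mul_eq_fmx_mul hl.symm
    · exact absurd he' he
    obtain ⟨-, hf⟩ | ⟨q', -, hq'⟩ := mul_fmx_mul_eq_fmx_mul (u := 1) (by simpa using hq)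
    · exact .inl hf
    · exact absurd hq' (mul_fmx_mul_ne_one _ _)
  · replace hl : e * (fmx * f) = fmx * (fmy ^ j * (fmx * (fmy ^ j' * (fmx * 1)))) := by
      simpa [mul_assoc] using hl.symm
    obtain ⟨he', -⟩ | ⟨q, rfl, hq⟩ := mul_fmx_mul_eq_fmx_mul hl
    · exact absurd he' he
    obtain ⟨rfl, rfl⟩ | ⟨q', -, hq'⟩ := eq_fmy_pow_of_mul_fmx_mul_eq hq
    · exact .inr ⟨j, j', hj, hj', hjj, rfl, by simp, rfl⟩
    obtain ⟨-, hf⟩ | ⟨q'', -, hq''⟩ := eq_fmy_pow_of_mul_fmx_mul_eq hq'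
    · exact .inl hf
    · exact absurd hq'' (mul_fmx_mul_ne_one _ _)

theorem exists_of_mul_eq {g h : FreeMonoid Bool} {k : ℕ} (hr : smRel m l r)
    (hl : l * g = fmx * fmy ^ k * fmx * h) (hk : 1 ≤ k) :
    ∃ k', 1 ≤ k' ∧ mPrec m k' k ∧ r = fmx * fmy ^ k * fmx ∧ h = fmy ^ k' * fmx * g := by
  rcases hr with ⟨rfl, -⟩ | ⟨i, i', -, hi', hii, rfl, rfl⟩
  · have hl' : fmx * (fmy ^ 0 * (fmx * g)) = fmx * (fmy ^ k * (fmx * h)) := by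
      simpa [mul_assoc] using hl
    have := (fmy_pow_mul_fmx_mul_inj (mul_left_cancel hl')).1
    omega
  · have hl' : fmx * (fmy ^ i * (fmx * (fmy ^ i' * fmx * g))) =
        fmx * (fmy ^ k * (fmx * h)) := by
      simpa [mul_assoc] using hl
    obtain ⟨rfl, rfl⟩ := fmy_pow_mul_fmx_mul_inj (mul_left_cancel hl')
    exact ⟨i', hi', hii, rfl, rfl⟩

theorem eq_of_eq_mul_mul {l₁ r₁ l₂ r₂ e g : FreeMonoid Bool} (h₁ : smRel m l₁ r₁)
    (h₂ : smRel m l₂ r₂) (hl : l₁ = e * l₂ * g) : e = 1 ∧ g = 1 ∧ r₁ = r₂ := by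
  obtain ⟨l₂', rfl, hl₂'⟩ := h₂.exists_eq_fmx_mul
  by_cases he : e = 1
  · subst he
    rw [one_mul] at hl
    rcases h₁ with ⟨rfl, rfl⟩ | ⟨j, j', hj, -, -, rfl, rfl⟩
    · rcases h₂ with ⟨hl₂, rfl⟩ | ⟨i, i', hi, -, -, hl₂, -⟩
      · rw [hl₂] at hl
        exact ⟨rfl, mul_eq_left.1 hl.symm, rfl⟩
      · rw [hl₂] at hl
        have hl' : fmx * (fmy ^ 0 * (fmx * 1)) =
            fmx * (fmy ^ i * (fmx * (fmy ^ i' * fmx * g))) := by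
          simpa [mul_assoc] using hl
        have := (fmy_pow_mul_fmx_mul_inj (mul_left_cancel hl')).1
        omega
    · obtain ⟨k, -, -, rfl, hk⟩ := h₂.exists_of_mul_eq (h := fmy ^ j' * fmx)
        (by simpa [mul_assoc] using hl.symm) hj
      have := fmy_pow_mul_fmx_mul_inj (u := 1) (v := g) (by simpa [mul_assoc] using hk)
      exact ⟨rfl, this.2.symm, rfl⟩
  · obtain hg | ⟨j, j', -, hj', -, -, hf, -⟩ :=
      h₁.eq_one_or_of_eq_mul_fmx_mul (f := l₂' * g) (by simpa [mul_assoc] using hl) he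
    · exact absurd (mul_eq_one'.1 hg).1 hl₂'
    · obtain ⟨k, -, -, -, hk⟩ := h₂.exists_of_mul_eq (h := 1) (k := j')
        (by simpa [mul_assoc] using congrArg (fmx * ·) hf) hj'
      exact absurd hk.symm (by simpa [mul_assoc] using mul_fmx_mul_ne_one (fmy ^ k) g)

theorem join_of_overlap {l₁ r₁ l₂ r₂ e f g : FreeMonoid Bool} (h₁ : smRel m l₁ r₁)
    (h₂ : smRel m l₂ r₂) (he : e ≠ 1) (hf : f ≠ 1) (hl₁ : l₁ = e * f) (hl₂ : l₂ = f * g) :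
    Join (ReflTransGen (Rewrites (smRel m))) (r₁ * g) (e * r₂) := by
  obtain ⟨l₂', rfl, -⟩ := h₂.exists_eq_fmx_mul
  obtain ⟨f', rfl⟩ := exists_eq_fmx_mul_of_fmx_mul_eq hl₂ hf
  rcases h₁.eq_one_or_of_eq_mul_fmx_mul hl₁ he with rfl | ⟨j, j', hj, hj', hjj, rfl, rfl, rfl⟩
  · obtain ⟨-, r₁', rfl⟩ := h₁.exists_rhs_eq_fmx_mul_and_mul_fmx
    obtain ⟨⟨r₂', rfl⟩, -⟩ := h₂.exists_rhs_eq_fmx_mul_and_mul_fmx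
    rw [mul_one] at hl₁ hl₂
    subst hl₁
    rw [mul_left_cancel hl₂] at h₂
    simpa [mul_assoc] using join_of_overlap_of_rhs h₁ h₂
  · obtain ⟨k, hk, hkj, rfl, rfl⟩ :=
      h₂.exists_of_mul_eq (g := 1) (by simpa [mul_assoc] using hl₂) (by omega)
    refine ⟨fmx * fmy ^ j * fmx, .single ?_, .single ?_⟩
    · exact Rewrites.of_rel (.inr ⟨j, k, hj, hk, hkj.trans hjj, by simp [mul_assoc], rfl⟩)
    · subst hl₁
      simpa [mul_assoc] using Rewrites.of_rel h₁

end smRel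

theorem stmt11_general (m : ℕ → ℕ) (u v w : FreeMonoid Bool) (hv : smRed m u v) (hw : smRed m u w) :
    ∃ z : FreeMonoid Bool,
      Relation.ReflTransGen (smRed m) v z ∧ Relation.ReflTransGen (smRed m) w z := by
  refine Rewrites.join_of_critical_pairs (fun _ r₁ _ _ _ _ h₁ h₂ hl ↦ ?_)
    (fun _ _ _ _ _ _ _ h₁ h₂ he hf _ hl₁ hl₂ ↦ smRel.join_of_overlap h₁ h₂ he hf hl₁ hl₂) hv hw
  obtain ⟨rfl, rfl, rfl⟩ := smRel.eq_of_eq_mul_mul h₁ h₂ hl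
  exact ⟨r₁, .refl, by simpa using .refl⟩

/-- All ambiguities of the rewriting system `xx → x`,
`x yʲ x y^{j'} x → x yʲ x` (for `j' ≺ j`) are resolvable: any two one-step
reductions of a word can be further reduced to a common word. -/
theorem stmt11 (m : ℕ → ℕ) (hm1 : m 1 = 1) (hmono : ∀ k, 1 ≤ k → m k < m (k + 1))
    (u v w : FreeMonoid Bool) (hv : smRed m u v) (hw : smRed m u w) :
    ∃ z : FreeMonoid Bool,
      Relation.ReflTransGen (smRed m) v z ∧ Relation.ReflTransGen (smRed m) w z :=
  stmt11_general m u v w hv hw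
end
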